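/- arXiv:0807.3088 — 12 statements merged into one kernel-verified Lean document; each statement's English description precedes it below -/
import Mathlib

section
/- Let K be a (commutative) semifield and let p : ℕ be nonzero with p • (1 : K) + 1 = 1. Then either 1 + 1 = (1 : K) (so K is an idempotent semifield), or p • (1 : K) = 0 (so K is a field of characteristic dividing p). -/
/-! If `a = p • 1` is absorbed by `1`, then it is absorbed by every `n • 1` with `n ≥ 1`, in
particular by itself: `a + a = a`. Cancelling a nonzero `a` in `a * (1 + 1) = a * 1` gives
`1 + 1 = 1`. -/

theorem nsmul_add_nsmul_self_of_nsmul_add_self {M : Type*} [AddCommMonoid M] {x : M} {p : ℕ}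
    (hp : p ≠ 0) (h : p • x + x = x) : p • x + p • x = p • x := by
  obtain ⟨q, rfl⟩ := Nat.exists_eq_succ_of_ne_zero hp
  calc (q + 1) • x + (q + 1) • x = q • x + ((q + 1) • x + x) := by rw [succ_nsmul]; abel
    _ = (q + 1) • x := by rw [h, succ_nsmul]

theorem one_add_one_eq_one_of_add_self {R : Type*} [Semiring R] [IsLeftCancelMulZero R] {a : R}
    (ha : a ≠ 0) (h : a + a = a) : (1 : R) + 1 = 1 :=
  mul_left_cancel₀ ha (by rw [mul_add, mul_one, h])

theorem semifield_nonzero_char {K : Type*} [Semifield K] (p : ℕ) (hp : p ≠ 0)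
    (h : p • (1 : K) + 1 = 1) :
    (1 : K) + 1 = 1 ∨ p • (1 : K) = 0 := by
  by_cases hzero : p • (1 : K) = 0
  · exact Or.inr hzero
  · exact Or.inl <|
      one_add_one_eq_one_of_add_self hzero (nsmul_add_nsmul_self_of_nsmul_add_self hp h)
end

section
/- Let K be a (commutative) semifield in which every element is additively quasi-invertible, i.e., for every x : K there exists y : K with x + y + x = x and y + x + y = y. Then either 1 + 1 = (1 : K) (so K is an idempotent semifield), or every element of K has an additive inverse (for every x : K there exists y : K with x + y = 0, so K is a field). -/
theorem quasifield_idempotent_or_field {K : Type*} [Semifield K]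
    (h : ∀ x : K, ∃ y : K, x + y + x = x ∧ y + x + y = y) :
    (1 : K) + 1 = 1 ∨ ∀ x : K, ∃ y : K, x + y = 0 := by
  obtain ⟨y, h1, h2⟩ := h 1
  have hee : (y + 1) + (y + 1) = y + 1 := by
    have : (y + 1) + (y + 1) = (y + 1 + y) + 1 := by ring
    rw [this, h2]
  by_cases h0 : y + 1 = 0
  · right
    intro x
    refine ⟨y * x, ?_⟩
    have : x + y * x = (y + 1) * x := by ring
    rw [this, h0, zero_mul]
  · left
    have : (y + 1) * (1 + 1) = (y + 1) * 1 := by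
      rw [mul_one]; rw [mul_add, mul_one]; exact hee
    exact mul_left_cancel₀ h0 this
end

section
/- Every finite idempotent semifield has exactly two elements: if K is an idempotent semifield and K is finite, then every a : K satisfies a = 0 or a = 1. (Hence F₁ = {0, 1} is the only finite quasi-field of characteristic 1.) -/
/-! In an idempotent semiring no sum of nonzero terms vanishes, since `x + y = 0` gives
`x = x + (x + y) = x + y = 0`. In a finite semifield every `a ≠ 0` satisfies `a ^ n = 1` for some
`n ≠ 0`, and then multiplication by `a` permutes the terms of the geometric sum
`s = 1 + a + ⋯ + a ^ (n - 1)`, so `a * s = s`. As `s ≠ 0`, cancelling gives `a = 1`. -/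

open Finset

theorem eq_zero_of_add_eq_zero_of_add_self {M : Type*} [AddMonoid M]
    (hidem : ∀ a : M, a + a = a) {x y : M} (h : x + y = 0) : x = 0 :=
  calc x = x + (x + y) := by rw [h, add_zero]
    _ = x + y := by rw [← add_assoc, hidem]
    _ = 0 := h

theorem mul_geom_sum_of_pow_eq_one {R : Type*} [Semiring R] {x : R} {n : ℕ} (hx : x ^ n = 1) :
    x * ∑ i ∈ range n, x ^ i = ∑ i ∈ range n, x ^ i := by
  rcases n with _ | m
  · simp
  · calc x * ∑ i ∈ range (m + 1), x ^ i = ∑ i ∈ range m, x ^ (i + 1) + x ^ (m + 1) := by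
          simp only [mul_sum, ← pow_succ']
          exact sum_range_succ (fun i ↦ x ^ (i + 1)) m
      _ = ∑ i ∈ range (m + 1), x ^ i := by rw [hx, sum_range_succ', pow_zero]

theorem geom_sum_ne_zero_of_add_self {R : Type*} [Semiring R] [Nontrivial R]
    (hidem : ∀ a : R, a + a = a) (x : R) {n : ℕ} (hn : n ≠ 0) :
    ∑ i ∈ range n, x ^ i ≠ 0 := by
  obtain ⟨m, rfl⟩ := Nat.exists_eq_succ_of_ne_zero hn
  rw [geom_sum_succ, add_comm]
  exact fun h ↦ one_ne_zero (eq_zero_of_add_eq_zero_of_add_self hidem h)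

theorem eq_one_of_pow_eq_one_of_add_self {R : Type*} [DivisionSemiring R]
    (hidem : ∀ a : R, a + a = a) {x : R} {n : ℕ} (hn : n ≠ 0) (hx : x ^ n = 1) : x = 1 :=
  mul_right_cancel₀ (geom_sum_ne_zero_of_add_self hidem x hn)
    (by rw [mul_geom_sum_of_pow_eq_one hx, one_mul])

theorem finite_idempotent_semifield_two_elements {K : Type*} [Semifield K] [Finite K]
    (hidem : ∀ a : K, a + a = a) :
    ∀ a : K, a = 0 ∨ a = 1 := by
  have := Fintype.ofFinite K
  intro a
  refine or_iff_not_imp_left.mpr fun ha ↦ ?_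
  have hcard : Fintype.card K - 1 ≠ 0 := Nat.sub_ne_zero_of_lt Fintype.one_lt_card
  exact eq_one_of_pow_eq_one_of_add_self hidem hcard (FiniteField.pow_card_sub_one_eq_one a ha)
end

section
/- Let K be an idempotent semifield and A : Matrix (Fin n) (Fin n) K. Then A is invertible (IsUnit A in the matrix semiring) if and only if A is a generalized permutation matrix: there exists a permutation σ : Equiv.Perm (Fin n) such that A i (σ i) ≠ 0 for every i, and A i j = 0 whenever j ≠ σ i. (Thus GLₙ(K) consists exactly of the matrices with exactly one nonzero entry in each row and each column.) -/
section
variable {K : Type*} [Semifield K]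

private lemma zsf_aux (hidem : ∀ a : K, a + a = a) (a b : K) (h : a + b = 0) : a = 0 := by
  have h2 : a + (a + b) = a + b := by rw [← add_assoc, hidem]
  rwa [h, add_zero] at h2

private lemma sum_zero_aux (hidem : ∀ a : K, a + a = a) {ι : Type*} [DecidableEq ι]
    (s : Finset ι) (f : ι → K)
    (h : ∑ i ∈ s, f i = 0) : ∀ i ∈ s, f i = 0 := by
  induction s using Finset.induction_on with
  | empty => simp
  | @insert a s hx ih =>
    rw [Finset.sum_insert hx] at h
    have h1 := zsf_aux hidem _ _ h
    have h2 : ∑ i ∈ s, f i = 0 := zsf_aux hidem _ _ (by rwa [add_comm] at h)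
    intro i hi
    rcases Finset.mem_insert.1 hi with rfl | hi
    · exact h1
    · exact ih h2 i hi

end

theorem idempotent_semifield_isUnit_matrix_iff {K : Type*} [Semifield K]
    (hidem : ∀ a : K, a + a = a) {n : ℕ} (A : Matrix (Fin n) (Fin n) K) :
    IsUnit A ↔ ∃ σ : Equiv.Perm (Fin n),
      (∀ i, A i (σ i) ≠ 0) ∧ ∀ i j, j ≠ σ i → A i j = 0 := by
  constructor
  · rintro ⟨u, hu⟩
    set B : Matrix (Fin n) (Fin n) K := (u⁻¹).val with hB
    have hAB : A * B = 1 := by rw [← hu]; exact u.mul_inv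
    have hBA : B * A = 1 := by rw [← hu]; exact u.inv_mul
    have hex : ∀ i : Fin n, ∃ k, A i k * B k i ≠ 0 := by
      intro i
      by_contra hc
      push_neg at hc
      have h1 : (A * B) i i = 0 := by
        rw [Matrix.mul_apply]
        exact Finset.sum_eq_zero fun k _ => hc k
      rw [hAB, Matrix.one_apply_eq] at h1
      exact one_ne_zero h1
    choose g hg using hex
    have hgB : ∀ i, B (g i) i ≠ 0 := fun i => right_ne_zero_of_mul (hg i)
    have hgA : ∀ i, A i (g i) ≠ 0 := fun i => left_ne_zero_of_mul (hg i)
    have hrow : ∀ i j, j ≠ g i → A i j = 0 := by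
      intro i j hj
      have h0 : (B * A) (g i) j = 0 := by
        rw [hBA, Matrix.one_apply_ne (fun h => hj h.symm)]
      rw [Matrix.mul_apply] at h0
      have := sum_zero_aux hidem _ _ h0 i (Finset.mem_univ i)
      rcases mul_eq_zero.1 this with h | h
      · exact absurd h (hgB i)
      · exact h
    have ginj : Function.Injective g := by
      intro i i' hgi
      by_contra hne
      have h0 : (A * B) i i' = 0 := by rw [hAB, Matrix.one_apply_ne hne]
      rw [Matrix.mul_apply] at h0
      have := sum_zero_aux hidem _ _ h0 (g i') (Finset.mem_univ _)
      rcases mul_eq_zero.1 this with h | h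
      · rw [← hgi] at h; exact hgA i h
      · exact hgB i' h
    exact ⟨Equiv.ofBijective g (Finite.injective_iff_bijective.1 ginj),
      fun i => hgA i, fun i j hj => hrow i j hj⟩
  · rintro ⟨σ, h1, h2⟩
    set B : Matrix (Fin n) (Fin n) K :=
      Matrix.of (fun j i => if j = σ i then (A i (σ i))⁻¹ else 0) with hBdef
    have hAB : A * B = 1 := by
      ext i i'
      rw [Matrix.mul_apply]
      simp only [hBdef, Matrix.of_apply, mul_ite, mul_zero]
      rw [Finset.sum_ite_eq' Finset.univ (σ i') (fun k => A i k * (A i' (σ i'))⁻¹)]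
      simp only [Finset.mem_univ, if_true]
      by_cases h : i = i'
      · subst h
        rw [mul_inv_cancel₀ (h1 i), Matrix.one_apply_eq]
      · rw [h2 i (σ i') (fun he => h ((σ.injective he).symm)), zero_mul,
          Matrix.one_apply_ne h]
    have hBA : B * A = 1 := by
      ext j j'
      rw [Matrix.mul_apply]
      simp only [hBdef, Matrix.of_apply, ite_mul, zero_mul]
      have key : ∀ i : Fin n, (if j = σ i then (A i (σ i))⁻¹ * A i j' else 0)
          = if i = σ.symm j then (A i (σ i))⁻¹ * A i j' else 0 := fun i =>
        if_congr ⟨fun h => by rw [h, Equiv.symm_apply_apply],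
          fun h => by rw [h, Equiv.apply_symm_apply]⟩ rfl rfl
      rw [Finset.sum_congr rfl (fun i _ => key i),
        Finset.sum_ite_eq' Finset.univ (σ.symm j)
          (fun i => (A i (σ i))⁻¹ * A i j')]
      simp only [Finset.mem_univ, if_true, Equiv.apply_symm_apply]
      by_cases h : j = j'
      · subst h
        rw [inv_mul_cancel₀ (by simpa using h1 (σ.symm j)), Matrix.one_apply_eq]
      · rw [h2 (σ.symm j) j' (by simpa using fun he => h he.symm), mul_zero,
          Matrix.one_apply_ne h]
    exact ⟨⟨A, B, hAB, hBA⟩, rfl⟩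
end

section
/- Let K be an idempotent semifield and A : Matrix (Fin m) (Fin n) K. If A is *singular, then A is singular. -/
/-- A matrix is singular if it admits an orthogonal decomposition `A = A₁ + A₂`
(entrywise disjoint supports) together with a nonzero vector `x` with `A₁ x = A₂ x`. -/
def Matrix.TropSingular {K : Type*} [Semifield K] {m n : Type*} [Fintype n]
    (A : Matrix m n K) : Prop :=
  ∃ A₁ A₂ : Matrix m n K, A = A₁ + A₂ ∧ (∀ i j, A₁ i j = 0 ∨ A₂ i j = 0) ∧
    ∃ x : n → K, x ≠ 0 ∧ A₁.mulVec x = A₂.mulVec x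

/-- A matrix is *singular if there are vectors `x₁, x₂` with disjoint supports,
not both zero, such that `A x₁ = A x₂`. -/
def Matrix.TropStarSingular {K : Type*} [Semifield K] {m n : Type*} [Fintype n]
    (A : Matrix m n K) : Prop :=
  ∃ x₁ x₂ : n → K, (∀ k, x₁ k = 0 ∨ x₂ k = 0) ∧ x₁ + x₂ ≠ 0 ∧
    A.mulVec x₁ = A.mulVec x₂

/-
Split the columns of `A` according to the support `S` of `x₂`: with `A₁` the columns outside `S`
and `A₂` those inside, `A₁ (x₁ + x₂) = A x₁` and `A₂ (x₁ + x₂) = A x₂`, because `x₁` vanishes on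
`S` and `x₂` off it.
-/

namespace Matrix

section IndicatorCols

variable {R : Type*} {m n : Type*}

noncomputable def indicatorCols [Zero R] (s : Set n) (A : Matrix m n R) : Matrix m n R :=
  of fun i => s.indicator (A i)

theorem indicatorCols_add_indicatorCols_compl [AddZeroClass R] (s : Set n) (A : Matrix m n R) :
    A.indicatorCols s + A.indicatorCols sᶜ = A := by
  ext i j
  exact congrFun (Set.indicator_self_add_compl s (A i)) j

theorem indicatorCols_eq_zero_or_indicatorCols_compl_eq_zero [Zero R] (s : Set n)
    (A : Matrix m n R) (i : m) (j : n) :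
    A.indicatorCols s i j = 0 ∨ A.indicatorCols sᶜ i j = 0 := by
  by_cases hj : j ∈ s
  · exact .inr (Set.indicator_of_notMem (Set.notMem_compl_iff.2 hj) _)
  · exact .inl (Set.indicator_of_notMem hj _)

theorem indicatorCols_mulVec [NonUnitalNonAssocSemiring R] [Fintype n] (s : Set n)
    (A : Matrix m n R) (x : n → R) :
    A.indicatorCols s *ᵥ x = A *ᵥ s.indicator x := by
  ext i
  refine Finset.sum_congr rfl fun j _ => ?_
  by_cases hj : j ∈ s <;> simp [indicatorCols, hj]

end IndicatorCols

end Matrix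

section DisjointSupports

variable {α M : Type*} [AddZeroClass M] {x₁ x₂ : α → M}

theorem Set.indicator_support_add_eq_right (h : ∀ k, x₁ k = 0 ∨ x₂ k = 0) :
    (Function.support x₂).indicator (x₁ + x₂) = x₂ := by
  ext k
  by_cases hk : x₂ k = 0
  · simp [hk]
  · simp [hk, (h k).resolve_right hk]

theorem Set.indicator_compl_support_add_eq_left (h : ∀ k, x₁ k = 0 ∨ x₂ k = 0) :
    (Function.support x₂)ᶜ.indicator (x₁ + x₂) = x₁ := by
  ext k
  by_cases hk : x₂ k = 0
  · simp [hk]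
  · simp [hk, (h k).resolve_right hk]

end DisjointSupports

theorem Matrix.TropStarSingular.tropSingular {K : Type*} [Semifield K] {m n : Type*} [Fintype n]
    {A : Matrix m n K} (h : A.TropStarSingular) : A.TropSingular := by
  obtain ⟨x₁, x₂, hdisj, hne, heq⟩ := h
  set S := Function.support x₂
  refine ⟨A.indicatorCols Sᶜ, A.indicatorCols S, ?_, ?_, x₁ + x₂, hne, ?_⟩
  · rw [add_comm, indicatorCols_add_indicatorCols_compl]
  · intro i j
    simpa only [compl_compl] using A.indicatorCols_eq_zero_or_indicatorCols_compl_eq_zero Sᶜ i j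
  · rw [indicatorCols_mulVec, indicatorCols_mulVec,
      Set.indicator_compl_support_add_eq_left hdisj,
      Set.indicator_support_add_eq_right hdisj, heq]

theorem starSingular_imp_singular_general {K : Type*} [Semifield K]
    {m n : ℕ} (A : Matrix (Fin m) (Fin n) K)
    (h : A.TropStarSingular) : A.TropSingular :=
  h.tropSingular

theorem starSingular_imp_singular {K : Type*} [Semifield K]
    (hidem : ∀ a : K, a + a = a) {m n : ℕ} (A : Matrix (Fin m) (Fin n) K)
    (h : A.TropStarSingular) : A.TropSingular :=
  starSingular_imp_singular_general A h
end

section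
/- Let K be a linearly ordered idempotent semifield and A : Matrix (Fin n) (Fin n) K. Then A is singular (tropically singular) if and only if A is a zero of the determinant, i.e., there exists a set T of permutations of Fin n such that ∑ over σ ∈ T of w(σ) equals ∑ over σ ∉ T of w(σ), where w(σ) = ∏ i, A i (σ i). -/
/-!
Call a family `f` balanced if it vanishes or attains its maximum at two distinct indices: the
tropical counterpart of a vanishing sum. The determinant condition says exactly that the family of
permutation weights is balanced, and singularity says exactly that, for some `x ≠ 0`, every row
`(A i j * x j)_j` is balanced.

If every row is balanced and `σ` has maximal weight, then each row `i` with `x (σ i) ≠ 0` has a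
second maximal entry at some column `σ j`, `j ≠ i`. Following these pointers closes a cycle, and
rerouting `σ` along it gives a permutation `τ ≠ σ` whose weight is at least that of `σ`, because
the factors `x (σ i)` cancel around the cycle.

Conversely, if the maximal weight is attained by `σ ≠ τ` and is nonzero, take a row `i₀` with
`σ i₀ ≠ τ i₀` and let `x` be the vector of tropical cofactors of that row. Row `i₀` is balanced
since its two expansion terms at `σ i₀` and `τ i₀` reach the maximum, and every other row is
balanced since it computes the permanent of a matrix with a repeated row (tropical Cramer rule).
If all weights vanish, Hall's theorem gives a set of columns meeting fewer nonzero rows than it has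
elements, and such a wide system has a nonzero balanced solution by induction on its size.
-/

open Finset Function

theorem Equiv.Perm.exists_ne_one_of_forall_exists_ne {α : Type*} [Finite α] {S : Set α}
    (R : α → α → Prop) (hS : S.Nonempty) (h : ∀ i ∈ S, ∃ j ∈ S, j ≠ i ∧ R i j) :
    ∃ ρ : Equiv.Perm α, ρ ≠ 1 ∧ ∀ i, ρ i ≠ i → i ∈ S ∧ R i (ρ i) := by
  classical
  choose! g hgS hgne hgR using h
  obtain ⟨f, hfS, hfix⟩ : ∃ f : α → α, (∀ i ∈ S, f i = g i) ∧ ∀ i ∉ S, f i = i :=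
    ⟨fun i => if i ∈ S then g i else i, fun i hi => if_pos hi, fun i hi => if_neg hi⟩
  obtain ⟨i₀, hi₀⟩ := hS
  have hiter : ∀ k, f^[k] i₀ ∈ S := fun k => by
    induction k with
    | zero => exact hi₀
    | succ k ih => rw [iterate_succ_apply', hfS _ ih]; exact hgS _ ih
  obtain ⟨a, b, hab, heq⟩ := Finite.exists_ne_map_eq_of_infinite fun k => f^[k] i₀
  wlog hlt : a < b generalizing a b
  · exact this b a hab.symm heq.symm (by omega)
  have hper : f^[a] i₀ ∈ periodicPts f := mk_mem_periodicPts (Nat.sub_pos_of_lt hlt) <| by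
    rw [IsPeriodicPt, IsFixedPt, ← iterate_add_apply, Nat.sub_add_cancel hlt.le]
    exact heq.symm
  set ρ := Equiv.Perm.ofSubtype ((bijOn_periodicPts f).equiv f)
  have hρ : ∀ i, ρ i ≠ i → ρ i = f i := fun i hi => by
    by_cases hp : i ∈ periodicPts f
    · rw [Equiv.Perm.ofSubtype_apply_of_mem _ hp]; rfl
    · exact absurd (Equiv.Perm.ofSubtype_apply_of_not_mem _ hp) hi
  refine ⟨ρ, fun h1 => ?_, fun i hi => ?_⟩
  · have h2 : ρ (f^[a] i₀) = f (f^[a] i₀) := by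
      rw [Equiv.Perm.ofSubtype_apply_of_mem _ hper]; rfl
    rw [h1, Equiv.Perm.one_apply, hfS _ (hiter a)] at h2
    exact hgne _ (hiter a) h2.symm
  · have hiS : i ∈ S := by_contra fun hiS => hi (hρ i hi ▸ hfix i hiS)
    rw [hρ i hi, hfS i hiS]
    exact ⟨hiS, hgR i hiS⟩

namespace Matrix

variable {R : Type*} {I J : Type*} [Fintype I] [Fintype J]

def nonzeroRows [DecidableEq I] [Zero R] [DecidableEq R] (M : Matrix I J R)
    (s : Finset J) : Finset I :=
  s.biUnion fun j => {i | M i j ≠ 0}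

theorem exists_card_nonzeroRows_lt [DecidableEq I] [Zero R] [DecidableEq R]
    (M : Matrix I J R) (h : ∀ f : J → I, Injective f → ∃ j, M (f j) j = 0) :
    ∃ s : Finset J, #(M.nonzeroRows s) < #s := by
  by_contra! hall
  obtain ⟨f, hf, hfM⟩ := (all_card_le_biUnion_card_iff_exists_injective _).1 hall
  obtain ⟨j, hj⟩ := h f hf
  simpa [hj] using hfM j

theorem exists_equiv_prod_ne_zero [CommMonoidWithZero R] [NoZeroDivisors R]
    [Nontrivial R] (M : Matrix I J R) (hcard : Fintype.card I = Fintype.card J) {f : J → I}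
    (hf : Injective f) (hM : ∀ j, M (f j) j ≠ 0) : ∃ e : I ≃ J, ∏ i, M i (e i) ≠ 0 := by
  let e := Equiv.ofBijective f ((Fintype.bijective_iff_injective_and_card f).2 ⟨hf, hcard.symm⟩)
  exact ⟨e.symm, prod_ne_zero_iff.2 fun i _ => by
    simpa only [e, Equiv.ofBijective_apply_symm_apply] using hM (e.symm i)⟩

variable [DecidableEq I] [DecidableEq J] [CommSemiring R]

def permMinor (M : Matrix I J R) (j : J) : R :=
  ∑ e : I ≃ {l // l ≠ j}, ∏ i, M i (e i)

theorem mul_permMinor_eq_sum (N : Matrix (Option I) J R) (j : J) :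
    N none j * (N.submatrix some id).permMinor j =
      ∑ b : {b : Option I ≃ J // b none = j}, ∏ r, N r (b.1 r) := by
  rw [permMinor, mul_sum]
  exact Fintype.sum_equiv (Equiv.optionSubtype j).symm _ _ fun e => by
    simp [Fintype.prod_option]

end Matrix

namespace IdempotentSemifield

variable {K : Type*} [Semifield K] [LinearOrder K]

theorem canonicallyOrderedAdd_of_add_eq_max (hadd : ∀ a b : K, a + b = max a b) :
    CanonicallyOrderedAdd K where
  exists_add_of_le {a b} h := ⟨b, by rw [hadd, max_eq_right h]⟩
  le_add_self a b := by rw [hadd]; exact le_max_right _ _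
  le_self_add a b := by rw [hadd]; exact le_max_left _ _

theorem isOrderedRing_of_add_eq_max (hadd : ∀ a b : K, a + b = max a b) :
    IsOrderedRing K := by
  have mul_mono : ∀ a b c : K, a ≤ b → a * c ≤ b * c := fun a b c h => by
    rw [← max_eq_right_iff, ← hadd, ← add_mul, hadd, max_eq_right h]
  exact
  { add_le_add_left := fun a b h c => by simp only [hadd]; exact max_le_max_right c h
    zero_le_one := by rw [← max_eq_right_iff, ← hadd, zero_add]
    mul_le_mul_of_nonneg_left := fun c _ a b h => by
      simpa only [mul_comm c] using mul_mono a b c h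
    mul_le_mul_of_nonneg_right := fun c _ a b h => mul_mono a b c h }

theorem sum_le_of_forall_le (hadd : ∀ a b : K, a + b = max a b) {ι : Type*} {s : Finset ι}
    {f : ι → K} {c : K} (h : ∀ i ∈ s, f i ≤ c) : ∑ i ∈ s, f i ≤ c := by
  have := canonicallyOrderedAdd_of_add_eq_max hadd
  induction s using Finset.cons_induction with
  | empty => exact zero_le
  | cons i s hi ih =>
    rw [sum_cons, hadd]
    exact max_le (h i (mem_cons_self i s)) (ih fun j hj => h j (mem_cons_of_mem hj))

theorem exists_eq_sum (hadd : ∀ a b : K, a + b = max a b) {ι : Type*} {s : Finset ι}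
    (hs : s.Nonempty) (f : ι → K) : ∃ i ∈ s, f i = ∑ j ∈ s, f j := by
  have := canonicallyOrderedAdd_of_add_eq_max hadd
  have := isOrderedRing_of_add_eq_max hadd
  obtain ⟨i, hi, hmax⟩ := s.exists_max_image f hs
  exact ⟨i, hi, le_antisymm (single_le_sum (fun _ _ => zero_le) hi)
    (sum_le_of_forall_le hadd hmax)⟩

theorem prod_le_prod_of_mul_le_mul_comp (hadd : ∀ a b : K, a + b = max a b) {ι : Type*}
    [Fintype ι] {f g y : ι → K} (ρ : Equiv.Perm ι) (hy : ∀ i, y i ≠ 0)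
    (h : ∀ i, f i * y i ≤ g i * y (ρ i)) : ∏ i, f i ≤ ∏ i, g i := by
  have := canonicallyOrderedAdd_of_add_eq_max hadd
  have := isOrderedRing_of_add_eq_max hadd
  have hY : ∏ i, y i ≠ 0 := prod_ne_zero_iff.2 fun i _ => hy i
  have key : (∏ i, f i) * ∏ i, y i ≤ (∏ i, g i) * ∏ i, y i :=
    calc (∏ i, f i) * ∏ i, y i = ∏ i, f i * y i := prod_mul_distrib.symm
      _ ≤ ∏ i, g i * y (ρ i) := prod_le_prod (fun _ _ => zero_le) fun i _ => h i
      _ = (∏ i, g i) * ∏ i, y i := by rw [prod_mul_distrib, Equiv.prod_comp]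
  simpa only [mul_inv_cancel_right₀ hY] using
    mul_le_mul_of_nonneg_right key (zero_le (a := (∏ i, y i)⁻¹))

def IsBalanced {ι : Type*} (f : ι → K) : Prop :=
  (∀ i, f i = 0) ∨ ∃ i j, i ≠ j ∧ f i = f j ∧ ∀ l, f l ≤ f i

theorem IsBalanced.exists_ne_le {ι : Type*} {f : ι → K} (hf : IsBalanced f) {c : ι}
    (hc : f c ≠ 0) : ∃ k ≠ c, f c ≤ f k := by
  rcases hf with h0 | ⟨i, j, hij, heq, hmax⟩
  · exact absurd (h0 c) hc
  · by_cases hi : i = c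
    · exact ⟨j, hi ▸ hij.symm, heq ▸ hmax c⟩
    · exact ⟨i, hi, hmax c⟩

theorem IsBalanced.sum_erase_eq (hadd : ∀ a b : K, a + b = max a b) {ι : Type*} [Fintype ι]
    [DecidableEq ι] {f : ι → K} (hf : IsBalanced f) {c : ι} (hc : ∀ l, f l ≤ f c) :
    ∑ j ∈ univ.erase c, f j = f c := by
  have := canonicallyOrderedAdd_of_add_eq_max hadd
  have := isOrderedRing_of_add_eq_max hadd
  refine le_antisymm (sum_le_of_forall_le hadd fun l _ => hc l) ?_
  by_cases h0 : f c = 0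
  · exact h0 ▸ zero_le
  obtain ⟨k, hk, hle⟩ := hf.exists_ne_le h0
  exact hle.trans (single_le_sum (fun _ _ => zero_le) (mem_erase.2 ⟨hk, mem_univ k⟩))

theorem IsBalanced.of_subtype (hadd : ∀ a b : K, a + b = max a b) {ι : Type*} {p : ι → Prop}
    {f : ι → K} (h0 : ∀ i, ¬p i → f i = 0) (hf : IsBalanced fun i : Subtype p => f i) :
    IsBalanced f := by
  have := canonicallyOrderedAdd_of_add_eq_max hadd
  rcases hf with hf | ⟨i, j, hij, heq, hmax⟩
  · refine Or.inl fun i => ?_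
    by_cases hi : p i
    exacts [hf ⟨i, hi⟩, h0 i hi]
  · refine Or.inr ⟨i, j, Subtype.coe_injective.ne hij, heq, fun l => ?_⟩
    by_cases hl : p l
    exacts [hmax ⟨l, hl⟩, h0 l hl ▸ zero_le]

theorem isBalanced_add_of_sum_eq (hadd : ∀ a b : K, a + b = max a b) {ι : Type*} [Fintype ι]
    {u v : ι → K} (hsum : ∑ i, u i = ∑ i, v i) (hdisj : ∀ i, u i = 0 ∨ v i = 0) :
    IsBalanced fun i => u i + v i := by
  have := canonicallyOrderedAdd_of_add_eq_max hadd
  have := isOrderedRing_of_add_eq_max hadd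
  by_cases h0 : ∑ i, u i = 0
  · have hu := sum_eq_zero_iff.1 h0
    have hv := sum_eq_zero_iff.1 (hsum ▸ h0)
    exact Or.inl fun i => show u i + v i = 0 by rw [hu i (mem_univ i), hv i (mem_univ i), add_zero]
  obtain ⟨i, -, hi⟩ := exists_eq_sum hadd (nonempty_of_sum_ne_zero h0) u
  obtain ⟨j, -, hj⟩ := exists_eq_sum hadd (nonempty_of_sum_ne_zero (hsum ▸ h0)) v
  have hle : ∀ l, u l + v l ≤ ∑ i, u i := fun l => by
    rw [hadd]
    exact max_le (single_le_sum (fun _ _ => zero_le) (mem_univ l))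
      (hsum ▸ single_le_sum (fun _ _ => zero_le) (mem_univ l))
  have hi' : u i + v i = ∑ i, u i := le_antisymm (hle i) (hi ▸ le_self_add)
  have hj' : u j + v j = ∑ i, u i := le_antisymm (hle j) (hsum ▸ hj ▸ le_add_self)
  refine Or.inr ⟨i, j, ?_, hi'.trans hj'.symm, fun l => (hle l).trans hi'.ge⟩
  rintro rfl
  rcases hdisj i with h | h
  · exact h0 (hi ▸ h)
  · exact h0 (hsum ▸ hj ▸ h)

theorem exists_sum_eq_sum_compl_iff_isBalanced (hadd : ∀ a b : K, a + b = max a b) {ι : Type*}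
    [Fintype ι] [DecidableEq ι] (w : ι → K) :
    (∃ T : Finset ι, ∑ i ∈ T, w i = ∑ i ∈ Tᶜ, w i) ↔ IsBalanced w := by
  constructor
  · rintro ⟨T, hT⟩
    have h := isBalanced_add_of_sum_eq hadd (u := fun i => if i ∈ T then w i else 0)
      (v := fun i => if i ∈ Tᶜ then w i else 0) (by simpa only [sum_ite_mem, univ_inter])
      (fun i => by by_cases hi : i ∈ T <;> simp [hi])
    convert h using 2 with i
    by_cases hi : i ∈ T <;> simp [hi]
  · intro hw
    rcases id hw with h0 | ⟨c, -, -, -, hc⟩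
    · exact ⟨∅, by simp [h0]⟩
    · exact ⟨{c}, by rw [sum_singleton, compl_singleton, hw.sum_erase_eq hadd hc]⟩

theorem tropSingular_iff_exists_isBalanced (hadd : ∀ a b : K, a + b = max a b) {m n : Type*}
    [Fintype n] [DecidableEq n] (A : Matrix m n K) :
    A.TropSingular ↔ ∃ x : n → K, x ≠ 0 ∧ ∀ i, IsBalanced fun j => A i j * x j := by
  constructor
  · rintro ⟨A₁, A₂, rfl, hdisj, x, hx, hAx⟩
    refine ⟨x, hx, fun i => ?_⟩
    simpa only [Matrix.add_apply, add_mul] using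
      isBalanced_add_of_sum_eq hadd (congrFun hAx i)
        fun j => (hdisj i j).imp (fun h => by simp [h]) (fun h => by simp [h])
  · rintro ⟨x, hx, hbal⟩
    obtain ⟨j₀, -⟩ := Function.ne_iff.1 hx
    have : Nonempty n := ⟨j₀⟩
    choose c hc using fun i => Finite.exists_max fun j => A i j * x j
    refine ⟨.of fun i j => if j = c i then A i j else 0,
      .of fun i j => if j ≠ c i then A i j else 0, ?_, fun i j => ?_, x, hx, ?_⟩
    · ext i j
      by_cases h : j = c i <;> simp [h]
    · by_cases h : j = c i <;> simp [h]
    · ext i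
      simp only [Matrix.mulVec, dotProduct, Matrix.of_apply, ite_mul, zero_mul, sum_ite_eq',
        mem_univ, if_true]
      rw [← sum_filter, filter_ne', (hbal i).sum_erase_eq hadd (hc i)]

theorem isBalanced_prod_of_exists_isBalanced_mul (hadd : ∀ a b : K, a + b = max a b)
    {n : Type*} [Fintype n] [DecidableEq n] (A : Matrix n n K) {x : n → K} (hx : x ≠ 0)
    (hbal : ∀ i, IsBalanced fun j => A i j * x j) :
    IsBalanced fun σ : Equiv.Perm n => ∏ i, A i (σ i) := by
  have := canonicallyOrderedAdd_of_add_eq_max hadd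
  obtain ⟨σ, hσ⟩ := Finite.exists_max fun σ : Equiv.Perm n => ∏ i, A i (σ i)
  by_cases hw : ∏ i, A i (σ i) = 0
  · exact Or.inl fun ρ => nonpos_iff_eq_zero.1 (hw ▸ hσ ρ)
  have hA : ∀ i, A i (σ i) ≠ 0 := fun i => prod_ne_zero_iff.1 hw i (mem_univ i)
  set S : Set n := {i | x (σ i) ≠ 0}
  have hS : S.Nonempty := by
    obtain ⟨j, hj⟩ := Function.ne_iff.1 hx
    exact ⟨σ.symm j, by simpa [S] using hj⟩
  obtain ⟨ρ, hρ1, hρ⟩ := Equiv.Perm.exists_ne_one_of_forall_exists_ne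
    (fun i j => A i (σ i) * x (σ i) ≤ A i (σ j) * x (σ j)) hS fun i hi => by
      obtain ⟨k, hk, hle⟩ := (hbal i).exists_ne_le (mul_ne_zero (hA i) hi)
      refine ⟨σ.symm k, ?_, fun h => hk (by rw [← h, Equiv.apply_symm_apply]), by simpa using hle⟩
      have hpos := (pos_of_ne_zero (mul_ne_zero (hA i) hi)).trans_le hle
      simpa [S] using right_ne_zero_of_mul hpos.ne'
  have hle : ∏ i, A i (σ i) ≤ ∏ i, A i (σ (ρ i)) := by
    refine prod_le_prod_of_mul_le_mul_comp hadd ρ (y := fun i => if i ∈ S then x (σ i) else 1)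
      (fun i => by split_ifs with hi; exacts [hi, one_ne_zero]) fun i => ?_
    by_cases hi : ρ i = i
    · rw [hi]
    obtain ⟨hiS, hR⟩ := hρ i hi
    have hρS : ρ i ∈ S := (hρ (ρ i) (ρ.injective.ne hi)).1
    simpa only [if_pos hiS, if_pos hρS] using hR
  obtain ⟨i, hi⟩ : ∃ i, ρ i ≠ i := not_forall.1 fun h => hρ1 (Equiv.ext h)
  exact Or.inr ⟨σ, ρ.trans σ, fun h => hi (σ.injective (congrFun (congrArg DFunLike.coe h) i).symm),
    le_antisymm hle (hσ _), hσ⟩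

theorem exists_isBalanced_mul_of_submatrix (hadd : ∀ a b : K, a + b = max a b)
    {I J : Type*} [Fintype I] [DecidableEq I] [DecidableEq J] (M : Matrix I J K) (s : Finset J)
    (h : ∃ y : s → K, y ≠ 0 ∧ ∀ i, IsBalanced fun j =>
      M.submatrix ((↑) : M.nonzeroRows s → I) ((↑) : s → J) i j * y j) :
    ∃ x : J → K, x ≠ 0 ∧ ∀ i, IsBalanced fun j => M i j * x j := by
  obtain ⟨y, hy, hbal⟩ := h
  refine ⟨fun j => if hj : j ∈ s then y ⟨j, hj⟩ else 0, ?_, fun i => ?_⟩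
  · obtain ⟨j, hj⟩ := Function.ne_iff.1 hy
    exact Function.ne_iff.2 ⟨j, by simpa using hj⟩
  by_cases hi : i ∈ M.nonzeroRows s
  · refine IsBalanced.of_subtype hadd (p := (· ∈ s)) (fun j hj => by simp [hj]) ?_
    simpa using hbal ⟨i, hi⟩
  · refine Or.inl fun j => ?_
    by_cases hj : j ∈ s
    · have hMij : M i j = 0 := by
        by_contra h
        exact hi (mem_biUnion.2 ⟨j, hj, by simpa using h⟩)
      simp [hMij]
    · simp [hj]

section Cofactors

variable {I J : Type*} [Fintype I] [DecidableEq I] [Fintype J] [DecidableEq J]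

theorem permMinor_ne_zero (hadd : ∀ a b : K, a + b = max a b) {M : Matrix I J K} {j : J}
    (e : I ≃ {l // l ≠ j}) (he : ∏ i, M i (e i) ≠ 0) : M.permMinor j ≠ 0 := by
  have := canonicallyOrderedAdd_of_add_eq_max hadd
  exact fun h => he (sum_eq_zero_iff.1 h e (mem_univ e))

theorem isBalanced_mul_permMinor (hadd : ∀ a b : K, a + b = max a b)
    (N : Matrix (Option I) J K) {b b' : Option I ≃ J} (hne : b none ≠ b' none)
    (heq : ∏ r, N r (b r) = ∏ r, N r (b' r))
    (hmax : ∀ c : Option I ≃ J, ∏ r, N r (c r) ≤ ∏ r, N r (b r)) :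
    IsBalanced fun j => N none j * (N.submatrix some id).permMinor j := by
  have := canonicallyOrderedAdd_of_add_eq_max hadd
  have := isOrderedRing_of_add_eq_max hadd
  have hle : ∀ j, N none j * (N.submatrix some id).permMinor j ≤ ∏ r, N r (b r) := fun j => by
    rw [Matrix.mul_permMinor_eq_sum]
    exact sum_le_of_forall_le hadd fun c _ => hmax c.1
  have hge : ∀ c : Option I ≃ J,
      ∏ r, N r (c r) ≤ N none (c none) * (N.submatrix some id).permMinor (c none) := fun c => by
    rw [Matrix.mul_permMinor_eq_sum]
    exact single_le_sum (f := fun c : {c : Option I ≃ J // c none = _} => ∏ r, N r (c.1 r))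
      (fun _ _ => zero_le) (mem_univ ⟨c, rfl⟩)
  have h₁ := le_antisymm (hle _) (hge b)
  have h₂ := le_antisymm (hle _) (heq ▸ hge b')
  exact Or.inr ⟨b none, b' none, hne, h₁.trans h₂.symm, fun l => (hle l).trans h₁.ge⟩

theorem isBalanced_mul_permMinor_of_card_eq (hadd : ∀ a b : K, a + b = max a b)
    (M : Matrix I J K) (hcard : Fintype.card J = Fintype.card I + 1) (i₀ : I) :
    IsBalanced fun j => M i₀ j * M.permMinor j := by
  let N : Matrix (Option I) J K := fun r => r.elim (M i₀) M
  have : Nonempty (Option I ≃ J) := Fintype.card_eq.1 (by rw [Fintype.card_option, hcard])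
  obtain ⟨b, hb⟩ := Finite.exists_max fun b : Option I ≃ J => ∏ r, N r (b r)
  -- the rows `none` and `some i₀` of `N` coincide, so swapping them preserves the weight
  set s := Equiv.swap none (some i₀)
  have hNs : ∀ r, N (s r) = N r := fun r => by
    rcases r with _ | i
    · rw [Equiv.swap_apply_left]; rfl
    · by_cases hi : i = i₀
      · subst hi; rw [Equiv.swap_apply_right]; rfl
      · rw [Equiv.swap_apply_of_ne_of_ne (Option.some_ne_none i) (by simpa using hi)]
  have hw : ∏ r, N r (b r) = ∏ r, N r ((s.trans b) r) := by
    rw [← Equiv.prod_comp s]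
    simp [hNs]
  exact isBalanced_mul_permMinor hadd N (b' := s.trans b) (by simp [s]) hw hb

theorem exists_isBalanced_mul_of_card_lt (hadd : ∀ a b : K, a + b = max a b)
    (M : Matrix I J K) (hIJ : Fintype.card I < Fintype.card J) :
    ∃ x : J → K, x ≠ 0 ∧ ∀ i, IsBalanced fun j => M i j * x j := by
  induction hN : Fintype.card J using Nat.strong_induction_on generalizing I J with
  | _ N ih =>
  have descend (s : Finset J) (hs : #(M.nonzeroRows s) < #s) (hsN : #s < N) :
      ∃ x : J → K, x ≠ 0 ∧ ∀ i, IsBalanced fun j => M i j * x j :=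
    exists_isBalanced_mul_of_submatrix hadd M s (ih #s hsN _ (by simpa using hs) (by simp))
  obtain ⟨j₀⟩ : Nonempty J := Fintype.card_pos_iff.1 (by omega)
  rcases Nat.lt_or_ge (Fintype.card I + 1) N with hlt | hle
  · refine descend (univ.erase j₀) ?_ ?_
    · rw [card_erase_of_mem (mem_univ j₀), card_univ]
      exact (card_le_univ _).trans_lt (by omega)
    · rw [card_erase_of_mem (mem_univ j₀), card_univ]
      omega
  have hcard : Fintype.card J = Fintype.card I + 1 := by omega
  by_cases hx : M.permMinor = 0
  · have hsq : Fintype.card I = Fintype.card {l // l ≠ j₀} := by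
      rw [← Fintype.card_congr (Equiv.optionSubtypeNe j₀), Fintype.card_option] at hcard
      omega
    obtain ⟨s, hs⟩ := (M.submatrix id ((↑) : {l // l ≠ j₀} → J)).exists_card_nonzeroRows_lt
      fun f hf => by
        by_contra! hne
        obtain ⟨e, he⟩ := Matrix.exists_equiv_prod_ne_zero _ hsq hf hne
        exact permMinor_ne_zero hadd e he (congrFun hx j₀)
    have hrows : M.nonzeroRows (s.image (↑)) =
        (M.submatrix id ((↑) : {l // l ≠ j₀} → J)).nonzeroRows s :=
      image_biUnion
    have hcard_s : #(s.image ((↑) : {l // l ≠ j₀} → J)) = #s :=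
      card_image_of_injective s Subtype.val_injective
    refine descend (s.image (↑)) (by rwa [hrows, hcard_s]) ?_
    rw [hcard_s]
    exact (card_le_univ s).trans_lt (by omega)
  · exact ⟨M.permMinor, hx, isBalanced_mul_permMinor_of_card_eq hadd M hcard⟩

end Cofactors

variable {n : Type*} [Fintype n] [DecidableEq n]

theorem exists_isBalanced_mul_of_prod_eq_zero (hadd : ∀ a b : K, a + b = max a b)
    (A : Matrix n n K) (h0 : ∀ σ : Equiv.Perm n, ∏ i, A i (σ i) = 0) :
    ∃ x : n → K, x ≠ 0 ∧ ∀ i, IsBalanced fun j => A i j * x j := by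
  obtain ⟨s, hs⟩ := A.exists_card_nonzeroRows_lt fun f hf => by
    by_contra! hne
    obtain ⟨σ, hσ⟩ := A.exists_equiv_prod_ne_zero rfl hf hne
    exact hσ (h0 σ)
  exact exists_isBalanced_mul_of_submatrix hadd A s
    (exists_isBalanced_mul_of_card_lt hadd _ (by simpa using hs))

theorem exists_isBalanced_mul_of_max_twice (hadd : ∀ a b : K, a + b = max a b)
    (A : Matrix n n K) {σ τ : Equiv.Perm n} (hne : σ ≠ τ)
    (heq : ∏ i, A i (σ i) = ∏ i, A i (τ i))
    (hmax : ∀ ρ : Equiv.Perm n, ∏ i, A i (ρ i) ≤ ∏ i, A i (σ i)) (hσ : ∏ i, A i (σ i) ≠ 0) :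
    ∃ x : n → K, x ≠ 0 ∧ ∀ i, IsBalanced fun j => A i j * x j := by
  obtain ⟨i₀, hi₀⟩ : ∃ i, σ i ≠ τ i := not_forall.1 fun h => hne (Equiv.ext h)
  let e := Equiv.optionSubtypeNe i₀
  let N : Matrix (Option {i // i ≠ i₀}) n K := A.submatrix e id
  have hW : ∀ ρ : Equiv.Perm n, ∏ r, N r ((e.trans ρ) r) = ∏ i, A i (ρ i) := fun ρ =>
    Equiv.prod_comp e fun i => A i (ρ i)
  refine ⟨(N.submatrix some id).permMinor, ?_, fun i => ?_⟩
  · refine Function.ne_iff.2 ⟨σ i₀, permMinor_ne_zero hadd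
      (σ.subtypeEquiv fun i => σ.injective.ne_iff.symm) ?_⟩
    exact prod_ne_zero_iff.2 fun i _ => prod_ne_zero_iff.1 hσ i (mem_univ _)
  by_cases hi : i = i₀
  · subst hi
    refine isBalanced_mul_permMinor hadd N (b := e.trans σ) (b' := e.trans τ)
      (by simpa [e] using hi₀) (by rw [hW, hW, heq]) fun c => ?_
    have hc := hW (e.symm.trans c)
    rw [← Equiv.trans_assoc, Equiv.self_trans_symm, Equiv.refl_trans] at hc
    rw [hc, hW]
    exact hmax _
  · exact isBalanced_mul_permMinor_of_card_eq hadd (N.submatrix some id)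
      (by rw [← Fintype.card_congr e, Fintype.card_option]) ⟨i, hi⟩

theorem exists_isBalanced_mul_of_isBalanced_prod (hadd : ∀ a b : K, a + b = max a b)
    (A : Matrix n n K) (h : IsBalanced fun σ : Equiv.Perm n => ∏ i, A i (σ i)) :
    ∃ x : n → K, x ≠ 0 ∧ ∀ i, IsBalanced fun j => A i j * x j := by
  have := canonicallyOrderedAdd_of_add_eq_max hadd
  rcases h with h0 | ⟨σ, τ, hne, heq, hmax⟩
  · exact exists_isBalanced_mul_of_prod_eq_zero hadd A h0
  by_cases hσ : ∏ i, A i (σ i) = 0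
  · exact exists_isBalanced_mul_of_prod_eq_zero hadd A fun ρ =>
      nonpos_iff_eq_zero.1 (hσ ▸ hmax ρ)
  · exact exists_isBalanced_mul_of_max_twice hadd A hne heq hmax hσ

end IdempotentSemifield

theorem singular_iff_zero_of_det {K : Type*} [Semifield K] [LinearOrder K]
    (hadd : ∀ a b : K, a + b = max a b) {n : ℕ} (A : Matrix (Fin n) (Fin n) K) :
    A.TropSingular ↔
      ∃ T : Finset (Equiv.Perm (Fin n)),
        ∑ σ ∈ T, ∏ i, A i (σ i) = ∑ σ ∈ Tᶜ, ∏ i, A i (σ i) := by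
  rw [IdempotentSemifield.tropSingular_iff_exists_isBalanced hadd,
    IdempotentSemifield.exists_sum_eq_sum_compl_iff_isBalanced hadd]
  exact ⟨fun ⟨_, hx, hbal⟩ =>
      IdempotentSemifield.isBalanced_prod_of_exists_isBalanced_mul hadd A hx hbal,
    IdempotentSemifield.exists_isBalanced_mul_of_isBalanced_prod hadd A⟩
end

section
/- Let K be an idempotent semifield and A : Matrix (Fin n) (Fin n) K. Then per(A) ≠ 0 if and only if there exists a matrix S : Matrix (Fin n) (Fin n) K with S invertible (IsUnit S in the matrix semiring) and S ≤ A entrywise for the canonical order, i.e., S i j + A i j = A i j for all i j. Equivalently, per(A) ≠ 0 if and only if there exists a permutation σ : Equiv.Perm (Fin n) with A i (σ i) ≠ 0 for all i. -/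
/-!
In an idempotent semiring a sum vanishes only if every summand does (`a + b = 0` gives
`a = a + (a + b) = 0`), so there is no cancellation: the permanent is nonzero iff some permutation
has all its entries nonzero. Such a `σ` yields the invertible monomial matrix
`diagonal (A i (σ i)) * P_σ`, which lies below `A`. Conversely, if `S * T = 1`, each diagonal sum
`∑ k, S i k * T k i = 1` has a nonzero term `S i (f i) * T (f i) i`, while every term of an
off-diagonal sum vanishes; hence `f` is injective, a permutation on whose graph `S`, and so `A`,
has no zeros.
-/

open Equiv

theorem subsingleton_addUnits_of_add_self {M : Type*} [AddMonoid M] (h : ∀ a : M, a + a = a) :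
    Subsingleton (AddUnits M) :=
  Subsingleton.addUnits_of_isAddUnit fun a ha => by
    obtain ⟨b, hab⟩ := ha.exists_neg
    calc a = a + (a + b) := by rw [hab, add_zero]
      _ = 0 := by rw [← add_assoc, h, hab]

namespace Matrix

variable {n R : Type*} [Fintype n]

theorem mul_apply_eq_zero_iff [NonUnitalNonAssocSemiring R] [Subsingleton (AddUnits R)]
    {M N : Matrix n n R} {i j : n} : (M * N) i j = 0 ↔ ∀ k, M i k * N k j = 0 := by
  simp [mul_apply]

variable [DecidableEq n]

theorem permanent_ne_zero_iff_exists_perm [CommSemiring R] [NoZeroDivisors R] [Nontrivial R]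
    [Subsingleton (AddUnits R)] (M : Matrix n n R) :
    M.permanent ≠ 0 ↔ ∃ σ : Perm n, ∀ i, M (σ i) i ≠ 0 := by
  simp [permanent, Finset.prod_eq_zero_iff]

theorem exists_perm_apply_ne_zero_of_isUnit [Semiring R] [NoZeroDivisors R] [Nontrivial R]
    [Subsingleton (AddUnits R)] {S : Matrix n n R} (hS : IsUnit S) :
    ∃ σ : Perm n, ∀ i, S i (σ i) ≠ 0 := by
  obtain ⟨T, hST⟩ := hS.exists_right_inv
  have hdiag : ∀ i, ∃ k, S i k * T k i ≠ 0 := fun i => by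
    by_contra! h
    simpa [hST] using mul_apply_eq_zero_iff.mpr h
  choose f hf using hdiag
  have hf_inj : Function.Injective f := fun i i' hii' => by
    by_contra hne
    have hoff : S i (f i) * T (f i) i' = 0 := mul_apply_eq_zero_iff.mp (by simp [hST, hne]) _
    exact mul_ne_zero (left_ne_zero_of_mul (hf i)) (hii' ▸ right_ne_zero_of_mul (hf i')) hoff
  exact ⟨.ofBijective f hf_inj.bijective_of_finite, fun i => left_ne_zero_of_mul (hf i)⟩

theorem isUnit_diagonal_mul_permMatrix [Semiring R] {d : n → R} (hd : IsUnit d) (σ : Perm n) :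
    IsUnit (diagonal d * σ.permMatrix R) := by
  refine (hd.map (diagonalRingHom n R)).mul ?_
  simpa using (Group.isUnit σ⁻¹).map (permMatrixHom (n := n) (R := R))

theorem diagonal_mul_permMatrix_apply [Semiring R] (d : n → R) (σ : Perm n) (i j : n) :
    (diagonal d * σ.permMatrix R) i j = if σ i = j then d i else 0 := by
  simp [diagonal_mul, PEquiv.toMatrix_apply]

end Matrix

open Matrix

theorem permanent_ne_zero_iff {K : Type*} [Semifield K]
    (hidem : ∀ a : K, a + a = a) {n : ℕ} (A : Matrix (Fin n) (Fin n) K) :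
    ((∑ σ : Equiv.Perm (Fin n), ∏ i, A i (σ i)) ≠ 0 ↔
      ∃ S : Matrix (Fin n) (Fin n) K, IsUnit S ∧ ∀ i j, S i j + A i j = A i j) ∧
    ((∑ σ : Equiv.Perm (Fin n), ∏ i, A i (σ i)) ≠ 0 ↔
      ∃ σ : Equiv.Perm (Fin n), ∀ i, A i (σ i) ≠ 0) := by
  have := subsingleton_addUnits_of_add_self hidem
  -- Mathlib's `permanent` multiplies the entries `M (σ i) i`, hence the transpose.
  have key : (∑ σ : Perm (Fin n), ∏ i, A i (σ i)) ≠ 0 ↔ ∃ σ : Perm (Fin n), ∀ i, A i (σ i) ≠ 0 :=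
    Aᵀ.permanent_ne_zero_iff_exists_perm
  refine ⟨key.trans ⟨fun ⟨σ, hσ⟩ => ?_, fun ⟨S, hS, hSA⟩ => ?_⟩, key⟩
  · refine ⟨diagonal (fun i => A i (σ i)) * σ.permMatrix K,
      isUnit_diagonal_mul_permMatrix (Pi.isUnit_iff.mpr fun i => (hσ i).isUnit) σ, fun i j => ?_⟩
    rw [diagonal_mul_permMatrix_apply]
    split_ifs with h
    · rw [← h, hidem]
    · rw [zero_add]
  · obtain ⟨σ, hσ⟩ := exists_perm_apply_ne_zero_of_isUnit hS
    exact ⟨σ, fun i hA => hσ i (by simpa [hA] using hSA i (σ i))⟩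
end

section
/- Let K be a linearly ordered idempotent semifield, n : ℕ, and a : Fin n → K. The tropical kernel Ker a of the linear form x ↦ ∑ k, a k * x k is a submodule of Fin n → K: it contains 0, and for all x y ∈ Ker a and c : K, one has x + y ∈ Ker a and c • x ∈ Ker a. -/
/-- The tropical kernel of the linear form `x ↦ ∑ k, a k * x k`. -/
def TropKer {K : Type*} [Semifield K] [LinearOrder K] {n : ℕ} (a : Fin n → K) :
    Set (Fin n → K) :=
  {x | (∀ k, a k * x k = 0) ∨
    ∃ j j', j ≠ j' ∧ a j * x j = a j' * x j' ∧ ∀ k, a k * x k ≤ a j * x j}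

theorem tropKer_is_submodule {K : Type*} [Semifield K] [LinearOrder K]
    (hadd : ∀ a b : K, a + b = max a b) {n : ℕ} (a : Fin n → K) :
    (0 : Fin n → K) ∈ TropKer a ∧
    (∀ x y : Fin n → K, x ∈ TropKer a → y ∈ TropKer a → x + y ∈ TropKer a) ∧
    (∀ (c : K) (x : Fin n → K), x ∈ TropKer a → c • x ∈ TropKer a) := by
  have hmul : ∀ c u v : K, u ≤ v → c * u ≤ c * v := by
    intro c u v h
    have h1 : c * u + c * v = c * v := by
      rw [← mul_add, hadd u v, max_eq_right h]
    calc c * u ≤ max (c * u) (c * v) := le_max_left _ _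
      _ = c * u + c * v := (hadd _ _).symm
      _ = c * v := h1
  have hz : ∀ u : K, max (0 : K) u = u := fun u => by rw [← hadd, zero_add]
  have hz' : ∀ u : K, max u (0 : K) = u := fun u => by rw [← hadd, add_zero]
  refine ⟨Or.inl fun k => by simp, ?_, ?_⟩
  · intro x y hx hy
    have hterm : ∀ k, a k * (x + y) k = max (a k * x k) (a k * y k) := fun k => by
      rw [Pi.add_apply, mul_add, hadd]
    rcases hx with hx0 | ⟨j, j', hjj, hje, hjm⟩
    · rcases hy with hy0 | ⟨i, i', hii, hie, him⟩
      · exact Or.inl fun k => by rw [hterm, hx0, hy0, max_self]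
      · refine Or.inr ⟨i, i', hii, ?_, fun k => ?_⟩
        · rw [hterm, hterm, hx0, hx0, hz, hz, hie]
        · rw [hterm, hterm, hx0, hx0, hz, hz]; exact him k
    · rcases hy with hy0 | ⟨i, i', hii, hie, him⟩
      · refine Or.inr ⟨j, j', hjj, ?_, fun k => ?_⟩
        · rw [hterm, hterm, hy0, hy0, hz', hz', hje]
        · rw [hterm, hterm, hy0, hy0, hz', hz']; exact hjm k
      · rcases le_total (a i * y i) (a j * x j) with hle | hle
        · refine Or.inr ⟨j, j', hjj, ?_, fun k => ?_⟩
          · rw [hterm, hterm, max_eq_left ((him j).trans hle),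
              max_eq_left (((him j').trans hle).trans_eq hje)]
            exact hje
          · rw [hterm, hterm, max_eq_left ((him j).trans hle)]
            exact max_le (hjm k) ((him k).trans hle)
        · refine Or.inr ⟨i, i', hii, ?_, fun k => ?_⟩
          · rw [hterm, hterm, max_eq_right ((hjm i).trans hle),
              max_eq_right (((hjm i').trans hle).trans_eq hie)]
            exact hie
          · rw [hterm, hterm, max_eq_right ((hjm i).trans hle)]
            exact max_le ((hjm k).trans hle) (him k)
  · intro c x hx
    rcases hx with hx0 | ⟨j, j', hjj, hje, hjm⟩
    · refine Or.inl fun k => ?_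
      have : a k * (c * x k) = c * (a k * x k) := by ring
      simp [Pi.smul_apply, smul_eq_mul, this, hx0 k]
    · refine Or.inr ⟨j, j', hjj, ?_, ?_⟩
      · have h1 : a j * (c * x j) = c * (a j * x j) := by ring
        have h2 : a j' * (c * x j') = c * (a j' * x j') := by ring
        simp only [Pi.smul_apply, smul_eq_mul, h1, h2, hje]
      · intro k
        have h1 : a k * (c * x k) = c * (a k * x k) := by ring
        have h2 : a j * (c * x j) = c * (a j * x j) := by ring
        simp only [Pi.smul_apply, smul_eq_mul, h1, h2]
        exact hmul c _ _ (hjm k)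
end

section
/- Let K be a linearly ordered idempotent semifield and A : Matrix (Fin p) (Fin n) K with n ≤ p. Then A is regular if and only if there exists an injective map r : Fin n → Fin p such that the n × n submatrix A.submatrix r id (the rows of A indexed by r) is regular. -/
open Finset Matrix Function

theorem Matrix.TropSingular.submatrix_id {K : Type*} [Semifield K] {l m n : Type*} [Fintype n]
    {A : Matrix m n K} (h : A.TropSingular) (r : l → m) : (A.submatrix r id).TropSingular := by
  obtain ⟨A₁, A₂, rfl, hdisj, x, hx, hmul⟩ := h
  exact ⟨A₁.submatrix r id, A₂.submatrix r id, rfl, fun i j => hdisj (r i) j, x, hx,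
    funext fun i => congrFun hmul (r i)⟩

namespace MaxPlus

variable {K : Type*} [Semifield K]

/-- In max-plus arithmetic `v ⬝ᵥ x` is the largest of the terms `v j * x j`; `x` is balanced
for `v` when this maximum is `0` or is attained at two distinct indices. -/
def IsBalanced {ι : Type*} [Fintype ι] (v x : ι → K) : Prop :=
  v ⬝ᵥ x = 0 ∨ ∃ j₁ j₂, j₁ ≠ j₂ ∧ v j₁ * x j₁ = v ⬝ᵥ x ∧ v j₂ * x j₂ = v ⬝ᵥ x

theorem IsBalanced.of_comp {ι κ : Type*} [Fintype ι] [Fintype κ] {e : κ → ι} (he : Injective e)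
    {v x : ι → K} (hx : ∀ c ∉ Set.range e, x c = 0) (h : IsBalanced (v ∘ e) (x ∘ e)) :
    IsBalanced v x := by
  have hdot : (v ∘ e) ⬝ᵥ (x ∘ e) = v ⬝ᵥ x :=
    Fintype.sum_of_injective e he _ _ (fun c hc => by simp [hx c hc]) fun _ => rfl
  rw [IsBalanced, hdot] at h
  rcases h with h0 | ⟨j₁, j₂, hne, h₁, h₂⟩
  · exact Or.inl h0
  · exact Or.inr ⟨e j₁, e j₂, he.ne hne, h₁, h₂⟩

theorem exists_isBalanced_of_block {ι κ : Type*} [Fintype κ] {N : Matrix ι κ K}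
    {S : Set ι} {C : Set κ} [Fintype {c // c ∉ C}] (hSC : ∀ i ∈ S, ∀ c ∉ C, N i c = 0)
    {y : {c // c ∉ C} → K} (hy : y ≠ 0) (hbal : ∀ i : {i // i ∉ S}, IsBalanced (N i ∘ (↑)) y) :
    ∃ x ≠ 0, ∀ i, IsBalanced (N i) x := by
  have hx : extend Subtype.val y 0 ∘ Subtype.val = y :=
    funext (Subtype.val_injective.extend_apply y 0)
  have hxC : ∀ c ∉ Set.range (Subtype.val : {c // c ∉ C} → κ), extend Subtype.val y 0 c = 0 :=
    fun c hc => extend_apply' _ _ _ hc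
  refine ⟨extend Subtype.val y 0, fun h0 => hy (by rw [← hx, h0]; rfl), fun i => ?_⟩
  by_cases hi : i ∈ S
  · refine Or.inl (Finset.sum_eq_zero fun c _ => ?_)
    by_cases hc : c ∈ C
    · rw [hxC c (by simpa using hc), mul_zero]
    · rw [hSC i hi c hc, zero_mul]
  · exact IsBalanced.of_comp Subtype.val_injective hxC (by rw [hx]; exact hbal ⟨i, hi⟩)

open Classical in
/-- `tropCramer N j` is the tropical permanent of `N` with column `j` deleted, a sum over the
injections `ι → κ` avoiding `j`: the max-plus analogue of the Cramer vector of `N`. -/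
noncomputable def tropCramer {ι κ : Type*} [Fintype ι] [Fintype κ] (N : Matrix ι κ K) (j : κ) : K :=
  ∑ f ∈ {f : ι → κ | Injective f ∧ ∀ i, f i ≠ j}, ∏ i, N i (f i)

variable [LinearOrder K] (hadd : ∀ a b : K, a + b = max a b)
include hadd

theorem nonneg (a : K) : 0 ≤ a := by
  simpa [← hadd] using le_max_left 0 a

theorem mul_le_mul_left {a b : K} (h : a ≤ b) (c : K) : c * a ≤ c * b := by
  have hab : a + b = b := by rw [hadd, max_eq_right h]
  rw [← max_eq_right_iff, ← hadd, ← mul_add, hab]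

section Sum

variable {ι : Type*} {s : Finset ι} {f : ι → K}

theorem sum_le_iff {c : K} : ∑ i ∈ s, f i ≤ c ↔ ∀ i ∈ s, f i ≤ c := by
  induction s using Finset.cons_induction with
  | empty => simpa using nonneg hadd c
  | cons a s ha ih => simp [sum_cons, hadd, ih]

theorem single_le_sum {j : ι} (hj : j ∈ s) : f j ≤ ∑ i ∈ s, f i :=
  (sum_le_iff hadd).1 le_rfl j hj

theorem sum_eq_zero_iff : ∑ i ∈ s, f i = 0 ↔ ∀ i ∈ s, f i = 0 := by
  simp only [← (nonneg hadd _).ge_iff_eq', sum_le_iff hadd]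

theorem exists_eq_sum (h : ∑ i ∈ s, f i ≠ 0) : ∃ j ∈ s, f j = ∑ i ∈ s, f i := by
  induction s using Finset.cons_induction with
  | empty => simp at h
  | cons a s ha ih =>
    rw [sum_cons, hadd] at h ⊢
    rcases le_total (f a) (∑ i ∈ s, f i) with hle | hle
    · rw [max_eq_right hle] at h ⊢
      obtain ⟨j, hj, hfj⟩ := ih h
      exact ⟨j, mem_cons_of_mem hj, hfj⟩
    · exact ⟨a, mem_cons_self a s, (max_eq_left hle).symm⟩

end Sum

section Row

variable {ι : Type*} [Fintype ι] {v w x : ι → K}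

theorem isBalanced_add (hdisj : ∀ j, v j = 0 ∨ w j = 0) (h : v ⬝ᵥ x = w ⬝ᵥ x) :
    IsBalanced (v + w) x := by
  have hsum : (v + w) ⬝ᵥ x = v ⬝ᵥ x := by rw [add_dotProduct, ← h, hadd, max_self]
  rw [IsBalanced, hsum]
  by_cases h0 : v ⬝ᵥ x = 0
  · exact Or.inl h0
  obtain ⟨j₁, -, hj₁⟩ : ∃ j ∈ univ, v j * x j = v ⬝ᵥ x := exists_eq_sum hadd h0
  obtain ⟨j₂, -, hj₂⟩ : ∃ j ∈ univ, w j * x j = w ⬝ᵥ x := exists_eq_sum hadd (h.symm.trans_ne h0)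
  have hv : v j₁ ≠ 0 := fun hv => h0 (by rw [← hj₁, hv, zero_mul])
  have hw : w j₂ ≠ 0 := fun hw => h0 (by rw [h, ← hj₂, hw, zero_mul])
  refine Or.inr ⟨j₁, j₂, fun h => (hdisj j₁).elim hv (h ▸ hw), ?_, ?_⟩
  · rw [Pi.add_apply, (hdisj j₁).resolve_left hv, add_zero, hj₁]
  · rw [Pi.add_apply, (hdisj j₂).resolve_right hw, zero_add, hj₂, h]

theorem IsBalanced.exists_sum_erase_eq [DecidableEq ι] [Nonempty ι] (hbal : IsBalanced v x) :
    ∃ k, v k * x k = v ⬝ᵥ x ∧ ∑ j ∈ univ.erase k, v j * x j = v ⬝ᵥ x := by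
  have hle : ∀ k, ∑ j ∈ univ.erase k, v j * x j ≤ v ⬝ᵥ x := fun k =>
    (sum_le_iff hadd).2 fun j _ => single_le_sum hadd (f := fun j => v j * x j) (mem_univ j)
  rcases hbal with h0 | ⟨j₁, j₂, hne, h₁, h₂⟩
  · obtain ⟨k⟩ := ‹Nonempty ι›
    refine ⟨k, ?_, le_antisymm (hle k) (h0 ▸ nonneg hadd _)⟩
    rw [h0]
    exact (sum_eq_zero_iff hadd).1 h0 k (mem_univ k)
  · refine ⟨j₂, h₂, le_antisymm (hle j₂) ?_⟩
    exact h₁ ▸ single_le_sum hadd (f := fun j => v j * x j) (mem_erase.2 ⟨hne, mem_univ j₁⟩)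

end Row

theorem tropSingular_iff {m n : Type*} [Fintype n] (A : Matrix m n K) :
    A.TropSingular ↔ ∃ x ≠ 0, ∀ i, IsBalanced (A i) x := by
  classical
  constructor
  · rintro ⟨A₁, A₂, rfl, hdisj, x, hx, hmul⟩
    exact ⟨x, hx, fun i => isBalanced_add hadd (hdisj i) (congrFun hmul i)⟩
  · rintro ⟨x, hx, hbal⟩
    have : Nonempty n := let ⟨j, _⟩ := Function.ne_iff.mp hx; ⟨j⟩
    choose σ hσ hσ' using fun i => (hbal i).exists_sum_erase_eq hadd
    -- `A₂` keeps the maximal entry `σ i` of each row, `A₁` the others, which reach the same maximum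
    refine ⟨of fun i j => if j ≠ σ i then A i j else 0, of fun i j => if j = σ i then A i j else 0,
      ?_, fun i j => by by_cases h : j = σ i <;> simp [h], x, hx, funext fun i => ?_⟩
    · ext i j
      by_cases h : j = σ i <;> simp [h]
    simp only [mulVec, dotProduct, of_apply, ite_mul, zero_mul, sum_ite_eq', mem_univ, if_true]
    rw [← sum_filter, filter_ne', hσ' i, ← hσ i]

theorem mulVec_ne_zero {κ τ : Type*} [Fintype τ] {X : Matrix κ τ K} {y : τ → K} (hy : y ≠ 0)
    (hX : ∀ t, Xᵀ t ≠ 0) : X *ᵥ y ≠ 0 := by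
  obtain ⟨t, ht⟩ := Function.ne_iff.mp hy
  obtain ⟨c, hc⟩ := Function.ne_iff.mp (hX t)
  refine Function.ne_iff.mpr ⟨c, fun h => mul_ne_zero hc ht ?_⟩
  exact (sum_eq_zero_iff hadd).1 h t (mem_univ t)

section Combination

variable {κ τ : Type*} [Fintype κ] [Fintype τ] {v : κ → K} {X : Matrix κ τ K} {y : τ → K}

theorem mul_mulVec_apply_eq {c : κ} {t : τ} (ht : (v ⬝ᵥ Xᵀ t) * y t = v ⬝ᵥ X *ᵥ y)
    (hc : v c * X c t = v ⬝ᵥ Xᵀ t) : v c * (X *ᵥ y) c = v ⬝ᵥ X *ᵥ y :=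
  le_antisymm (single_le_sum hadd (f := fun c => v c * (X *ᵥ y) c) (mem_univ c)) <|
    calc v ⬝ᵥ X *ᵥ y = v c * (X c t * y t) := by rw [← ht, ← hc, mul_assoc]
      _ ≤ v c * (X *ᵥ y) c :=
        mul_le_mul_left hadd (single_le_sum hadd (f := fun t => X c t * y t) (mem_univ t)) _

theorem isBalanced_mulVec_of_isBalanced_col {t : τ} (ht : (v ⬝ᵥ Xᵀ t) * y t = v ⬝ᵥ X *ᵥ y)
    (hb : IsBalanced v (Xᵀ t)) : IsBalanced v (X *ᵥ y) := by
  rcases hb with h0 | ⟨c₁, c₂, hne, h₁, h₂⟩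
  · exact Or.inl (ht.symm.trans (by rw [h0, zero_mul]))
  · exact Or.inr ⟨c₁, c₂, hne, mul_mulVec_apply_eq hadd ht h₁, mul_mulVec_apply_eq hadd ht h₂⟩

theorem isBalanced_mulVec (hy : ∀ c, IsBalanced (X c) y)
    (hv : {t | ¬IsBalanced v (Xᵀ t)}.Subsingleton) : IsBalanced v (X *ᵥ y) := by
  set μ := v ⬝ᵥ X *ᵥ y
  have hμ : μ = ∑ t, (v ⬝ᵥ Xᵀ t) * y t := dotProduct_mulVec v X y
  by_cases hμ0 : μ = 0
  · exact Or.inl hμ0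
  obtain ⟨t₀, -, ht₀⟩ : ∃ t ∈ univ, (v ⬝ᵥ Xᵀ t) * y t = μ := hμ ▸ exists_eq_sum hadd (hμ ▸ hμ0)
  by_cases hb : IsBalanced v (Xᵀ t₀)
  · exact isBalanced_mulVec_of_isBalanced_col hadd ht₀ hb
  -- Some entry `c` realises the maximum through `t₀`; the balanced row `c` of the system for `y`
  -- then realises it through a second index `t₁`, for which `v` must be balanced.
  obtain ⟨c, -, hc⟩ : ∃ c ∈ univ, v c * X c t₀ = v ⬝ᵥ Xᵀ t₀ :=
    exists_eq_sum hadd (left_ne_zero_of_mul (ht₀ ▸ hμ0))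
  have hcμ : v c * (X *ᵥ y) c = μ := mul_mulVec_apply_eq hadd ht₀ hc
  obtain ⟨t₁, hne, ht₁⟩ : ∃ t₁, t₁ ≠ t₀ ∧ X c t₁ * y t₁ = (X *ᵥ y) c := by
    rcases hy c with h0 | ⟨t₁, t₂, hne, h₁, h₂⟩
    · exact absurd (by rw [← hcμ]; exact mul_eq_zero_of_right _ h0) hμ0
    · by_cases h : t₁ = t₀
      · exact ⟨t₂, fun h' => hne (h.trans h'.symm), h₂⟩
      · exact ⟨t₁, h, h₁⟩
  refine isBalanced_mulVec_of_isBalanced_col hadd (le_antisymm ?_ ?_)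
    (by_contra fun hb₁ => hne (hv hb₁ hb))
  · exact (single_le_sum hadd (f := fun t => (v ⬝ᵥ Xᵀ t) * y t) (mem_univ t₁)).trans_eq hμ.symm
  · calc μ = v c * X c t₁ * y t₁ := by rw [← hcμ, ← ht₁, mul_assoc]
      _ ≤ (v ⬝ᵥ Xᵀ t₁) * y t₁ := by
        rw [mul_comm _ (y t₁), mul_comm _ (y t₁)]
        exact mul_le_mul_left hadd
          (single_le_sum hadd (f := fun c => v c * Xᵀ t₁ c) (mem_univ c)) _

end Combination

section Cramer

variable {ι κ : Type*} [Fintype ι] [Fintype κ]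

theorem prod_le_tropCramer (N : Matrix ι κ K) {f : ι → κ} {j : κ} (hf : Injective f)
    (hj : ∀ i, f i ≠ j) : ∏ i, N i (f i) ≤ tropCramer N j := by
  classical
  refine single_le_sum hadd (f := fun f : ι → κ => ∏ i, N i (f i)) ?_
  simp [hf, hj]

theorem exists_prod_eq_tropCramer (N : Matrix ι κ K) {j : κ} (h : tropCramer N j ≠ 0) :
    ∃ f : ι → κ, Injective f ∧ (∀ i, f i ≠ j) ∧ ∏ i, N i (f i) = tropCramer N j := by
  classical
  unfold tropCramer at h ⊢
  obtain ⟨f, hf, hprod⟩ := exists_eq_sum hadd h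
  simp only [mem_filter, mem_univ, true_and] at hf
  exact ⟨f, hf.1, hf.2, hprod⟩

theorem tropCramer_ne_zero (N : Matrix ι κ K) {f : ι → κ} {j : κ} (hf : Injective f)
    (hN : ∀ i, N i (f i) ≠ 0) (hj : ∀ i, f i ≠ j) : tropCramer N j ≠ 0 := fun h =>
  prod_ne_zero_iff.2 (fun i _ => hN i) <|
    le_antisymm (h ▸ prod_le_tropCramer hadd N hf hj) (nonneg hadd _)

theorem isBalanced_tropCramer (N : Matrix ι κ K) (r : ι) :
    IsBalanced (N r) (tropCramer N) := by
  classical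
  set μ := N r ⬝ᵥ tropCramer N
  by_cases hμ : μ = 0
  · exact Or.inl hμ
  obtain ⟨j, -, hj⟩ : ∃ j ∈ univ, N r j * tropCramer N j = μ := exists_eq_sum hadd hμ
  obtain ⟨f, hf, hfj, hprod⟩ :=
    exists_prod_eq_tropCramer hadd N (right_ne_zero_of_mul (hj.trans_ne hμ))
  -- Redirecting the entry of row `r` from `f r` to `j` turns `f` into an injection `g`
  -- avoiding `f r` whose term in `tropCramer N (f r)` again carries the maximum `μ`.
  set g := Equiv.swap j (f r) ∘ f
  have hg : N r (f r) * ∏ i, N i (g i) = N r j * ∏ i, N i (f i) := by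
    have hgf : ∀ i ∈ univ.erase r, N i (g i) = N i (f i) := fun i hi =>
      congrArg (N i) (Equiv.swap_apply_of_ne_of_ne (hfj i) (hf.ne (ne_of_mem_erase hi)))
    rw [← mul_prod_erase _ _ (mem_univ r), ← mul_prod_erase _ (fun i => N i (f i)) (mem_univ r),
      prod_congr rfl hgf, show g r = j from Equiv.swap_apply_right _ _]
    ring
  have hgr : ∀ i, g i ≠ f r := fun i h =>
    hfj i ((Equiv.swap j (f r)).injective (h.trans (Equiv.swap_apply_left _ _).symm))
  refine Or.inr ⟨j, f r, (hfj r).symm, hj, le_antisymm ?_ ?_⟩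
  · exact single_le_sum hadd (f := fun j => N r j * tropCramer N j) (mem_univ _)
  · calc μ = N r (f r) * ∏ i, N i (g i) := by rw [hg, hprod, hj]
      _ ≤ N r (f r) * tropCramer N (f r) :=
        mul_le_mul_left hadd (prod_le_tropCramer hadd N ((Equiv.injective _).comp hf) hgr) _

end Cramer

theorem exists_isBalanced_of_card_lt {ι κ : Type*} [Fintype ι] [Fintype κ] (N : Matrix ι κ K)
    (h : Fintype.card ι < Fintype.card κ) : ∃ x ≠ 0, ∀ i, IsBalanced (N i) x := by
  induction hι : Fintype.card ι using Nat.strong_induction_on generalizing ι κ with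
  | _ m ih =>
  classical
  by_cases hmatch : ∃ f : ι → κ, Injective f ∧ ∀ i, N i (f i) ≠ 0
  · obtain ⟨f, hf, hN⟩ := hmatch
    obtain ⟨j, hj⟩ : ∃ j, ∀ i, f i ≠ j := by
      by_contra! hs
      exact (Fintype.card_le_of_surjective f hs).not_gt h
    exact ⟨tropCramer N, Function.ne_iff.2 ⟨j, tropCramer_ne_zero hadd N hf hN hj⟩,
      isBalanced_tropCramer hadd N⟩
  -- By Hall's theorem some set `S` of rows is supported on fewer than `#S` columns `C`, so the
  -- complementary block is again underdetermined.
  obtain ⟨S, hS⟩ : ∃ S : Finset ι, #{c | ∃ i ∈ S, N i c ≠ 0} < #S := by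
    by_contra! hHall
    exact hmatch ((@Fintype.all_card_le_filter_rel_iff_exists_injective _ _ _
      (fun i c => N i c ≠ 0) fun _ _ => inferInstance).1 hHall)
  set C : Finset κ := {c | ∃ i ∈ S, N i c ≠ 0}
  have hcard : Fintype.card {i // i ∉ S} < Fintype.card {c // c ∉ C} ∧
      Fintype.card {i // i ∉ S} < m := by
    simp only [Fintype.card_subtype_compl, Fintype.card_coe]
    have := S.card_le_univ
    omega
  obtain ⟨y, hy, hbal⟩ := ih _ hcard.2
    (N.submatrix Subtype.val Subtype.val : Matrix {i // i ∉ S} {c // c ∉ C} K) hcard.1 rfl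
  refine exists_isBalanced_of_block (S := (S : Set ι)) (C := (C : Set κ)) ?_ hy hbal
  exact fun i hi c hc => by_contra fun hN => hc (mem_filter.2 ⟨mem_univ c, i, hi, hN⟩)

theorem exists_isBalanced_of_forall_submatrix {n p : ℕ} (hnp : n ≤ p)
    (A : Matrix (Fin p) (Fin n) K)
    (h : ∀ r : Fin n → Fin p, Injective r → ∃ x ≠ 0, ∀ i, IsBalanced (A (r i)) x) :
    ∃ x ≠ 0, ∀ i, IsBalanced (A i) x := by
  induction p, hnp using Nat.le_induction with
  | base => exact h id injective_id
  | succ p hnp ih =>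
    have hdel : ∀ i : Fin (p + 1), ∃ x ≠ 0, ∀ r ≠ i, IsBalanced (A r) x := by
      intro i
      obtain ⟨x, hx, hbal⟩ := ih (A.submatrix i.succAbove id) fun r hr =>
        h (i.succAbove ∘ r) (Fin.succAbove_right_injective.comp hr)
      refine ⟨x, hx, fun r hr => ?_⟩
      obtain ⟨r, rfl⟩ := Fin.exists_succAbove_eq hr
      exact hbal r
    choose xs hxs hbal using hdel
    set T : Fin (n + 1) → Fin (p + 1) := Fin.castLE (Nat.succ_le_succ hnp)
    set X : Matrix (Fin n) (Fin (n + 1)) K := of fun c t => xs (T t) c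
    obtain ⟨y, hy, hXy⟩ := exists_isBalanced_of_card_lt hadd X (by simp)
    refine ⟨X *ᵥ y, mulVec_ne_zero hadd hy fun t => hxs (T t), fun r => ?_⟩
    refine isBalanced_mulVec hadd hXy fun t₁ h₁ t₂ h₂ =>
      Fin.castLE_injective (Nat.succ_le_succ hnp) ?_
    have hT : ∀ t, ¬IsBalanced (A r) (Xᵀ t) → T t = r := fun t ht =>
      by_contra fun hne => ht (hbal (T t) r (Ne.symm hne))
    exact (hT t₁ h₁).trans (hT t₂ h₂).symm

end MaxPlus

theorem regular_iff_exists_regular_square_submatrix {K : Type*} [Semifield K]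
    [LinearOrder K] (hadd : ∀ a b : K, a + b = max a b) {n p : ℕ} (hnp : n ≤ p)
    (A : Matrix (Fin p) (Fin n) K) :
    ¬ A.TropSingular ↔
      ∃ r : Fin n → Fin p, Function.Injective r ∧ ¬ (A.submatrix r id).TropSingular := by
  refine ⟨fun hA => ?_, fun ⟨r, _, hr⟩ hA => hr (hA.submatrix_id r)⟩
  by_contra! hsub
  refine hA ((MaxPlus.tropSingular_iff hadd A).2 ?_)
  exact MaxPlus.exists_isBalanced_of_forall_submatrix hadd hnp A fun r hr =>
    (MaxPlus.tropSingular_iff hadd _).1 (hsub r hr)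
end

section
/- Let K be a linearly ordered idempotent semifield and let f : Fin p → (Fin n → K) be a family of p vectors of Kⁿ with p < n. Then the family (f i) is not weakly generating: there exists a nonzero vector a : Fin n → K such that f i ∈ Ker a for every i : Fin p. (Every weakly generating family of the free module Kⁿ has at least n elements.) -/
section
variable {K : Type*} [Semifield K] [LinearOrder K]

lemma idem_zero_le (hadd : ∀ a b : K, a + b = max a b) (a : K) : 0 ≤ a := by
  have h : max 0 a = a := by rw [← hadd, zero_add]
  rw [← h]; exact le_max_left 0 a

lemma idem_mul_le_mul (hadd : ∀ a b : K, a + b = max a b) {b c : K} (h : b ≤ c) (a : K) :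
    a * b ≤ a * c := by
  have h1 : a * b + a * c = a * c := by rw [← mul_add, hadd b c, max_eq_right h]
  have h2 : a * b ≤ a * b + a * c := by rw [hadd]; exact le_max_left _ _
  rwa [h1] at h2

lemma idem_add_le_add (hadd : ∀ a b : K, a + b = max a b) {x x' y y' : K}
    (h1 : x ≤ x') (h2 : y ≤ y') : x + y ≤ x' + y' := by
  rw [hadd, hadd]; exact max_le_max h1 h2

lemma tropker_comb (hadd : ∀ a b : K, a + b = max a b) {n : ℕ} {a a' x : Fin n → K} (c d : K)
    (hx : x ∈ TropKer a) (hx' : x ∈ TropKer a') :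
    x ∈ TropKer (fun k => c * a k + d * a' k) := by
  have hterm : ∀ k, (c * a k + d * a' k) * x k = c * (a k * x k) + d * (a' k * x k) := by
    intro k; ring
  rcases hx with h1 | ⟨j, j', hne, heq, hle⟩
  · rcases hx' with h1' | ⟨l, l', hne', heq', hle'⟩
    · left; intro k; rw [hterm, h1 k, h1' k]; simp
    · right
      refine ⟨l, l', hne', ?_, fun k => ?_⟩
      · simp only [hterm, h1 l, h1 l', heq']
      · simp only [hterm, h1 k, h1 l]
        exact idem_add_le_add hadd le_rfl (idem_mul_le_mul hadd (hle' k) d)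
  · rcases hx' with h1' | ⟨l, l', hne', heq', hle'⟩
    · right
      refine ⟨j, j', hne, ?_, fun k => ?_⟩
      · simp only [hterm, h1' j, h1' j', heq]
      · simp only [hterm, h1' k, h1' j]
        exact idem_add_le_add hadd (idem_mul_le_mul hadd (hle k) c) le_rfl
    · rcases le_total (c * (a j * x j)) (d * (a' l * x l)) with hcd | hcd
      · right
        have e1 : c * (a l * x l) + d * (a' l * x l) = d * (a' l * x l) := by
          rw [hadd]
          exact max_eq_right ((idem_mul_le_mul hadd (hle l) c).trans hcd)
        have e2 : c * (a l' * x l') + d * (a' l' * x l') = d * (a' l' * x l') := by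
          rw [hadd]
          exact max_eq_right (((idem_mul_le_mul hadd (hle l') c).trans hcd).trans_eq
            (congrArg (d * ·) heq'))
        refine ⟨l, l', hne', ?_, fun k => ?_⟩
        · rw [hterm, hterm, e1, e2, heq']
        · rw [hterm, hterm, e1, hadd]
          exact max_le ((idem_mul_le_mul hadd (hle k) c).trans hcd)
            (idem_mul_le_mul hadd (hle' k) d)
      · right
        have e1 : c * (a j * x j) + d * (a' j * x j) = c * (a j * x j) := by
          rw [hadd]
          exact max_eq_left ((idem_mul_le_mul hadd (hle' j) d).trans hcd)
        have e2 : c * (a j' * x j') + d * (a' j' * x j') = c * (a j' * x j') := by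
          rw [hadd]
          exact max_eq_left ((idem_mul_le_mul hadd (hle' j') d).trans
            (hcd.trans_eq (congrArg (c * ·) heq)))
        refine ⟨j, j', hne, ?_, fun k => ?_⟩
        · rw [hterm, hterm, e1, e2, heq]
        · rw [hterm, hterm, e1, hadd]
          exact max_le (idem_mul_le_mul hadd (hle k) c)
            ((idem_mul_le_mul hadd (hle' k) d).trans hcd)

lemma tropker_insertNth (hadd : ∀ a b : K, a + b = max a b) {m : ℕ} (j0 : Fin (m+1))
    (a'' : Fin m → K) (x : Fin (m+1) → K)
    (h : (x ∘ j0.succAbove) ∈ TropKer a'') : x ∈ TropKer (j0.insertNth 0 a'') := by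
  rcases h with h1 | ⟨j, j', hne, heq, hle⟩
  · left
    intro k
    refine Fin.succAboveCases j0 ?_ ?_ k
    · simp
    · intro i; simpa using h1 i
  · right
    refine ⟨j0.succAbove j, j0.succAbove j', fun hh => hne (j0.succAbove_right_injective hh),
      ?_, fun k => ?_⟩
    · simpa using heq
    · refine Fin.succAboveCases j0 ?_ ?_ k
      · simpa using idem_zero_le hadd _
      · intro i; simpa using hle i


lemma tropker_key (hadd : ∀ a b : K, a + b = max a b) :
    ∀ (p n : ℕ), p < n → ∀ f : Fin p → (Fin n → K),
      ∃ a : Fin n → K, a ≠ 0 ∧ ∀ i : Fin p, f i ∈ TropKer a := by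
  intro p
  induction p with
  | zero =>
    intro n hn f
    refine ⟨fun _ => 1, fun h => one_ne_zero (congrFun h ⟨0, hn⟩), fun i => i.elim0⟩
  | succ p ih =>
    intro n hn f
    obtain ⟨m, rfl⟩ : ∃ m, n = m + 1 := ⟨n - 1, by omega⟩
    obtain ⟨a, ha0, ha⟩ := ih (m + 1) (by omega) (fun i => f i.castSucc)
    set g := f (Fin.last p) with hgdef
    by_cases hg : g ∈ TropKer a
    · exact ⟨a, ha0, fun i => i.lastCases hg ha⟩
    obtain ⟨j0, hj0⟩ := Finite.exists_max (fun k => a k * g k)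
    have hM1 : a j0 * g j0 ≠ 0 := by
      intro h0
      apply hg
      left
      intro k
      exact le_antisymm (h0 ▸ hj0 k) (idem_zero_le hadd _)
    obtain ⟨a'', ha''0, ha''⟩ := ih m (by omega) (fun i => (f i.castSucc) ∘ j0.succAbove)
    set a' := Fin.insertNth (α := fun _ => K) j0 0 a'' with ha'def
    have ha'j0 : a' j0 = 0 := by rw [ha'def, Fin.insertNth_apply_same]
    have ha' : ∀ i : Fin p, f i.castSucc ∈ TropKer a' :=
      fun i => tropker_insertNth hadd j0 a'' _ (ha'' i)
    have ha'0 : a' ≠ 0 := by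
      intro h
      apply ha''0
      funext i
      have := congrFun h (j0.succAbove i)
      simpa [ha'def] using this
    obtain ⟨j1, hj1⟩ := Finite.exists_max (fun k => a' k * g k)
    by_cases hM2 : a' j1 * g j1 = 0
    · refine ⟨a', ha'0, fun i => i.lastCases ?_ ha'⟩
      left
      intro k
      exact le_antisymm (hM2 ▸ hj1 k) (idem_zero_le hadd _)
    set M1 := a j0 * g j0 with hM1def
    set M2 := a' j1 * g j1 with hM2def
    have hterm : ∀ k, (M2 * a k + M1 * a' k) * g k
        = M2 * (a k * g k) + M1 * (a' k * g k) := by intro k; ring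
    refine ⟨fun k => M2 * a k + M1 * a' k, ?_, fun i => i.lastCases ?_
      (fun i => tropker_comb hadd M2 M1 (ha i) (ha' i))⟩
    · intro h
      have h0 := congrFun h j0
      simp only [ha'j0, mul_zero, add_zero, Pi.zero_apply] at h0
      rcases mul_eq_zero.mp h0 with h1 | h1
      · exact hM2 h1
      · apply hM1
        show a j0 * g j0 = 0
        rw [h1, zero_mul]
    · right
      have hj1j0 : j1 ≠ j0 := by
        intro h
        apply hM2
        rw [hM2def, h, ha'j0, zero_mul]
      have ht0 : (M2 * a j0 + M1 * a' j0) * g j0 = M2 * M1 := by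
        rw [hterm, ha'j0, zero_mul, mul_zero, add_zero]
      have ht1 : (M2 * a j1 + M1 * a' j1) * g j1 = M2 * M1 := by
        rw [hterm, ← hM2def, hadd, mul_comm M1 M2]
        exact max_eq_right (idem_mul_le_mul hadd (hj0 j1) M2)
      refine ⟨j0, j1, fun h => hj1j0 h.symm, by rw [ht0, ht1], fun k => ?_⟩
      rw [ht0, hterm, hadd]
      exact max_le (idem_mul_le_mul hadd (hj0 k) M2)
        (by rw [mul_comm M2 M1]; exact idem_mul_le_mul hadd (hj1 k) M1)

end

theorem small_family_not_weakly_generating {K : Type*} [Semifield K] [LinearOrder K]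
    (hadd : ∀ a b : K, a + b = max a b) {p n : ℕ} (hpn : p < n)
    (f : Fin p → (Fin n → K)) :
    ∃ a : Fin n → K, a ≠ 0 ∧ ∀ i : Fin p, f i ∈ TropKer a :=
  tropker_key hadd p n hpn f
end

section
/- Let K be a linearly ordered idempotent semifield and A : Matrix (Fin n) (Fin p) K with n < p. Then A is singular. (Every regular family of vectors of the free module Kⁿ has at most n elements.) -/
/-!
Say `x` solves a row `v` when the maximum of the terms `v c * x c` is attained at least twice. A
common solution `x ≠ 0` of all rows makes `A` singular: put a maximal term of each row into `A₁`
and the rest into `A₂`. Solutions of a row are closed under sums (which are maxima) and scalings,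
so they can be found by tropical elimination, by induction on the number of rows: since more than
`n` columns remain after deleting any column `c`, the first `n` rows have a nonzero common solution
vanishing at `c`. If such a solution `y` fails the last row `b`, a single term `b j * y j` strictly
dominates; a solution `y'` vanishing at `j` that also fails `b` is dominated at some `j' ≠ j`, and
after rescaling both dominant terms to the same value, `y + y'` attains the maximum of `b` at both
`j` and `j'`.
-/

section IdempotentAddition

variable {K : Type*} [LinearOrder K]

theorem zero_le_of_add_eq_max [AddZeroClass K] (hadd : ∀ a b : K, a + b = max a b) (a : K) :
    0 ≤ a :=
  max_eq_right_iff.mp ((hadd 0 a).symm.trans (zero_add a))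

theorem mul_le_mul_left_of_add_eq_max [Semiring K] (hadd : ∀ a b : K, a + b = max a b)
    {a b : K} (c : K) (h : a ≤ b) : c * a ≤ c * b := by
  have : max (c * a) (c * b) = c * b := by
    rw [← hadd, ← mul_add, hadd, max_eq_right h]
  exact max_eq_right_iff.mp this

theorem Finset.sum_le_of_add_eq_max [AddCommMonoid K] (hadd : ∀ a b : K, a + b = max a b)
    {ι : Type*} {s : Finset ι} {f : ι → K} {c : K} (h : ∀ i ∈ s, f i ≤ c) : ∑ i ∈ s, f i ≤ c := by
  classical
  induction s using Finset.induction_on with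
  | empty => simpa using zero_le_of_add_eq_max hadd c
  | insert i s hi ih =>
    rw [Finset.sum_insert hi, hadd]
    exact max_le (h i (mem_insert_self i s)) (ih fun j hj => h j (mem_insert_of_mem hj))

theorem Finset.le_sum_of_add_eq_max [AddCommMonoid K] (hadd : ∀ a b : K, a + b = max a b)
    {ι : Type*} {s : Finset ι} {f : ι → K} {i : ι} (hi : i ∈ s) : f i ≤ ∑ j ∈ s, f j := by
  classical
  rw [← Finset.add_sum_erase s f hi, hadd]
  exact le_max_left _ _

end IdempotentAddition

section TropicalHyperplane

variable {K : Type*} [CommSemiring K] [LinearOrder K] {C : Type*}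

/-- The tropical hyperplane of `v`: the maximum of the terms `v c * x c` is attained at least
twice, phrased as every term being matched by a term in another column. -/
def tropHyperplane (v : C → K) : Set (C → K) :=
  {x | ∀ c, ∃ c' ≠ c, v c * x c ≤ v c' * x c'}

theorem add_mem_tropHyperplane (hadd : ∀ a b : K, a + b = max a b) {v x y : C → K}
    (hx : x ∈ tropHyperplane v) (hy : y ∈ tropHyperplane v) : x + y ∈ tropHyperplane v := by
  have hterm : ∀ c, v c * (x + y) c = max (v c * x c) (v c * y c) := fun c => by
    rw [Pi.add_apply, mul_add, hadd]
  intro c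
  rcases le_total (v c * y c) (v c * x c) with hle | hle
  · obtain ⟨c', hc', hxc'⟩ := hx c
    exact ⟨c', hc', by rw [hterm, hterm, max_eq_left hle]; exact hxc'.trans (le_max_left _ _)⟩
  · obtain ⟨c', hc', hyc'⟩ := hy c
    exact ⟨c', hc', by rw [hterm, hterm, max_eq_right hle]; exact hyc'.trans (le_max_right _ _)⟩

theorem smul_mem_tropHyperplane (hadd : ∀ a b : K, a + b = max a b) {v x : C → K} (a : K)
    (hx : x ∈ tropHyperplane v) : a • x ∈ tropHyperplane v := by
  intro c
  obtain ⟨c', hc', hxc'⟩ := hx c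
  refine ⟨c', hc', ?_⟩
  simpa only [Pi.smul_apply, smul_eq_mul, mul_left_comm (v _) a]
    using mul_le_mul_left_of_add_eq_max hadd a hxc'

theorem exists_max_ne_zero_of_notMem_tropHyperplane [Nontrivial C]
    (hadd : ∀ a b : K, a + b = max a b) {v x : C → K} (hx : x ∉ tropHyperplane v) :
    ∃ j, v j * x j ≠ 0 ∧ ∀ k, v k * x k ≤ v j * x j := by
  simp only [tropHyperplane, Set.mem_ofPred_eq, not_forall, not_exists, not_and, not_le] at hx
  obtain ⟨j, hj⟩ := hx
  obtain ⟨k, hk⟩ := exists_ne j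
  refine ⟨j, (lt_of_le_of_lt (zero_le_of_add_eq_max hadd _) (hj k hk)).ne', fun k => ?_⟩
  rcases eq_or_ne k j with rfl | hkj
  · exact le_rfl
  · exact (hj k hkj).le

variable [NoZeroDivisors K]

theorem exists_ne_zero_mem_tropHyperplane [Nontrivial C] (hadd : ∀ a b : K, a + b = max a b)
    {V : Set (C → K)} (hV_add : ∀ x ∈ V, ∀ y ∈ V, x + y ∈ V)
    (hV_smul : ∀ (a : K), ∀ x ∈ V, a • x ∈ V) (hV : ∀ c, ∃ y ∈ V, y ≠ 0 ∧ y c = 0)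
    (b : C → K) : ∃ x ∈ V, x ≠ 0 ∧ x ∈ tropHyperplane b := by
  obtain ⟨y, hyV, hy0, -⟩ := hV (Classical.arbitrary C)
  by_cases hy : y ∈ tropHyperplane b
  · exact ⟨y, hyV, hy0, hy⟩
  obtain ⟨j, hβ, hj⟩ := exists_max_ne_zero_of_notMem_tropHyperplane hadd hy
  obtain ⟨y', hy'V, hy'0, hy'j⟩ := hV j
  by_cases hy' : y' ∈ tropHyperplane b
  · exact ⟨y', hy'V, hy'0, hy'⟩
  obtain ⟨j', hβ', hj'⟩ := exists_max_ne_zero_of_notMem_tropHyperplane hadd hy'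
  have hjj' : j ≠ j' := by
    rintro rfl
    exact hβ' (by rw [hy'j, mul_zero])
  set β := b j * y j
  set β' := b j' * y' j'
  -- rescaled so that both dominant terms become `β * β'`
  set x := β' • y + β • y'
  have hterm : ∀ k, b k * x k = max (β' * (b k * y k)) (β * (b k * y' k)) := fun k => by
    rw [← hadd]; simp only [x, Pi.add_apply, Pi.smul_apply, smul_eq_mul]; ring
  have hle : ∀ k, b k * x k ≤ β * β' := fun k => by
    rw [hterm]
    exact max_le ((mul_le_mul_left_of_add_eq_max hadd β' (hj k)).trans_eq (mul_comm _ _))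
      (mul_le_mul_left_of_add_eq_max hadd β (hj' k))
  have hj_eq : b j * x j = β * β' := le_antisymm (hle j) (by
    rw [hterm]; exact (mul_comm β β').trans_le (le_max_left _ _))
  have hj'_eq : b j' * x j' = β * β' := le_antisymm (hle j') (by
    rw [hterm]; exact le_max_right _ _)
  refine ⟨x, hV_add _ (hV_smul _ _ hyV) _ (hV_smul _ _ hy'V), ?_, fun k => ?_⟩
  · intro hx0
    have : b j * x j = 0 := by rw [hx0, Pi.zero_apply, mul_zero]
    exact mul_ne_zero hβ hβ' (hj_eq ▸ this)
  · rcases eq_or_ne k j with rfl | hkj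
    · exact ⟨j', hjj'.symm, by rw [hj_eq, hj'_eq]⟩
    · exact ⟨j, hkj.symm, by rw [hj_eq]; exact hle k⟩

theorem exists_ne_zero_forall_mem_tropHyperplane [Nontrivial K]
    (hadd : ∀ a b : K, a + b = max a b) {n : ℕ} (A : Matrix (Fin n) C K) (S : Finset C)
    (hS : n < S.card) :
    ∃ x : C → K, x ≠ 0 ∧ (∀ j ∉ S, x j = 0) ∧ ∀ i, x ∈ tropHyperplane (A i) := by
  classical
  induction n generalizing S with
  | zero =>
    obtain ⟨c, hc⟩ := Finset.card_pos.mp hS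
    refine ⟨Pi.single c 1, fun h => by simpa using congrFun h c, fun j hj => ?_,
      fun i => i.elim0⟩
    exact Pi.single_eq_of_ne (ne_of_mem_of_not_mem hc hj).symm _
  | succ n ih =>
    have : Nontrivial C := by
      obtain ⟨a, -, b, -, hab⟩ := Finset.one_lt_card.mp (by omega : 1 < S.card)
      exact nontrivial_of_ne a b hab
    let V : Set (C → K) := {x | (∀ j ∉ S, x j = 0) ∧ ∀ i, x ∈ tropHyperplane (A (Fin.succ i))}
    have hV_add : ∀ x ∈ V, ∀ y ∈ V, x + y ∈ V := fun x ⟨hxS, hxA⟩ y ⟨hyS, hyA⟩ =>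
      ⟨fun j hj => by simp [hxS j hj, hyS j hj],
        fun i => add_mem_tropHyperplane hadd (hxA i) (hyA i)⟩
    have hV_smul : ∀ (a : K), ∀ x ∈ V, a • x ∈ V := fun a x ⟨hxS, hxA⟩ =>
      ⟨fun j hj => by simp [hxS j hj], fun i => smul_mem_tropHyperplane hadd a (hxA i)⟩
    have hV : ∀ c, ∃ y ∈ V, y ≠ 0 ∧ y c = 0 := by
      intro c
      have hcard := Finset.pred_card_le_card_erase (s := S) (a := c)
      obtain ⟨y, hy0, hyS, hyA⟩ := ih (fun i => A i.succ) (S.erase c) (by omega)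
      refine ⟨y, ⟨fun j hj => hyS j (fun h => hj (Finset.mem_of_mem_erase h)), hyA⟩, hy0, ?_⟩
      exact hyS c (Finset.notMem_erase c S)
    obtain ⟨x, ⟨hxS, hxA⟩, hx0, hx⟩ :=
      exists_ne_zero_mem_tropHyperplane hadd hV_add hV_smul hV (A 0)
    exact ⟨x, hx0, hxS, Fin.cases hx hxA⟩

end TropicalHyperplane

theorem Matrix.tropSingular_of_forall_mem_tropHyperplane {K : Type*} [Semifield K]
    [LinearOrder K] (hadd : ∀ a b : K, a + b = max a b) {m C : Type*} [Fintype C]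
    (A : Matrix m C K) {x : C → K} (hx0 : x ≠ 0) (hx : ∀ i, x ∈ tropHyperplane (A i)) :
    A.TropSingular := by
  classical
  have : Nonempty C := let ⟨c, _⟩ := Function.ne_iff.mp hx0; ⟨c⟩
  choose c₁ hc₁ using fun i => Finite.exists_max fun c => A i c * x c
  refine ⟨of fun i j => if j = c₁ i then A i j else 0, of fun i j => if j = c₁ i then 0 else A i j,
    ?_, fun i j => ?_, x, hx0, funext fun i => ?_⟩
  · ext i j
    by_cases h : j = c₁ i <;> simp [h]
  · by_cases h : j = c₁ i <;> simp [h]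
  · simp only [mulVec, dotProduct, of_apply, ite_mul, zero_mul, Finset.sum_ite_eq',
      Finset.mem_univ, if_true]
    obtain ⟨c', hc', hle⟩ := hx i (c₁ i)
    refine le_antisymm ?_ (Finset.sum_le_of_add_eq_max hadd fun j _ => ?_)
    · calc A i (c₁ i) * x (c₁ i) ≤ A i c' * x c' := hle
        _ = if c' = c₁ i then 0 else A i c' * x c' := (if_neg hc').symm
        _ ≤ ∑ j, if j = c₁ i then 0 else A i j * x j :=
          Finset.le_sum_of_add_eq_max hadd (f := fun j => if j = c₁ i then 0 else A i j * x j)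
            (Finset.mem_univ c')
    · split_ifs
      · exact zero_le_of_add_eq_max hadd _
      · exact hc₁ i j

theorem wide_matrix_singular {K : Type*} [Semifield K] [LinearOrder K]
    (hadd : ∀ a b : K, a + b = max a b) {n p : ℕ} (hnp : n < p)
    (A : Matrix (Fin n) (Fin p) K) :
    A.TropSingular := by
  obtain ⟨x, hx0, -, hx⟩ :=
    exists_ne_zero_forall_mem_tropHyperplane hadd A Finset.univ (by simpa using hnp)
  exact A.tropSingular_of_forall_mem_tropHyperplane hadd hx0 hx
end

section
/- Incomplete basis theorem: let K be a linearly ordered idempotent semifield, p ≤ n, and let f : Fin p → (Fin n → K) be a family such that the n × p matrix with columns f is regular. Then there exists an injective map g : Fin (n - p) → Fin n such that the n × n matrix B indexed by Fin n × (Fin p ⊕ Fin (n - p)), defined by B i (Sum.inl j) = f j i and B i (Sum.inr j) = (if i = g j then 1 else 0), is regular; i.e., the family f can be completed to a regular family of n vectors by adjoining n - p standard basis vectors of Kⁿ. -/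
set_option linter.unusedSectionVars false


namespace TropAux

variable {K : Type*} [Semifield K] [LinearOrder K]

/-- Row `i` has a "tie": either the row value is zero or the max is attained
at two distinct columns. -/
def TieAt {R J : Type*} [Fintype J] (A : Matrix R J K) (x : J → K) (i : R) : Prop :=
  A.mulVec x i = 0 ∨ ∃ j₁ j₂ : J, j₁ ≠ j₂ ∧
    A i j₁ * x j₁ = A.mulVec x i ∧ A i j₂ * x j₂ = A.mulVec x i

/-- Singularity relative to a set of rows. -/
def SingOn {R J : Type*} [Fintype J] (A : Matrix R J K) (T : Finset R) : Prop :=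
  ∃ x : J → K, x ≠ 0 ∧ ∀ i ∈ T, TieAt A x i

section Basic

variable (hadd : ∀ a b : K, a + b = max a b)
include hadd

lemma zero_le' (a : K) : 0 ≤ a := by
  have h := hadd a 0
  rw [add_zero] at h
  calc (0 : K) ≤ max a 0 := le_max_right _ _
    _ = a := h.symm

lemma le_add_l (a b : K) : a ≤ a + b := by
  rw [hadd]; exact le_max_left _ _

lemma le_add_r (a b : K) : b ≤ a + b := by
  rw [hadd]; exact le_max_right _ _

lemma add_eq_zero_left {a b : K} (h : a + b = 0) : a = 0 :=
  le_antisymm (h ▸ le_add_l hadd a b) (zero_le' hadd a)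

lemma mul_le_mono {a b : K} (h : a ≤ b) (c : K) : a * c ≤ b * c := by
  calc a * c ≤ a * c + b * c := le_add_l hadd _ _
    _ = (a + b) * c := (add_mul _ _ _).symm
    _ = b * c := by rw [hadd, max_eq_right h]

lemma mul_le_mul'' {a b c d : K} (h1 : a ≤ b) (h2 : c ≤ d) : a * c ≤ b * d := by
  calc a * c ≤ b * c := mul_le_mono hadd h1 c
    _ = c * b := mul_comm _ _
    _ ≤ d * b := mul_le_mono hadd h2 b
    _ = b * d := mul_comm _ _

lemma sum_cases {ι : Type*} (s : Finset ι) (w : ι → K) :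
    (∑ i ∈ s, w i) = 0 ∨ ∃ j ∈ s, w j = ∑ i ∈ s, w i := by
  classical
  induction s using Finset.induction_on with
  | empty => left; simp
  | @insert a s ha ih =>
    rw [Finset.sum_insert ha, hadd]
    rcases ih with h0 | ⟨j, hj, hjs⟩
    · rw [h0, max_eq_left (zero_le' hadd _)]
      exact Or.inr ⟨a, Finset.mem_insert_self _ _, rfl⟩
    · rcases le_total (∑ i ∈ s, w i) (w a) with hle | hle
      · exact Or.inr ⟨a, Finset.mem_insert_self _ _, (max_eq_left hle).symm⟩
      · exact Or.inr ⟨j, Finset.mem_insert_of_mem hj,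
          hjs.trans (max_eq_right hle).symm⟩

lemma term_le_sum {ι : Type*} (s : Finset ι) (w : ι → K) {j : ι} (hj : j ∈ s) :
    w j ≤ ∑ i ∈ s, w i := by
  classical
  rw [← Finset.add_sum_erase s w hj, hadd]
  exact le_max_left _ _

end Basic

lemma mulVec_apply {R J : Type*} [Fintype J] (A : Matrix R J K) (x : J → K) (i : R) :
    A.mulVec x i = ∑ j, A i j * x j := rfl

section WithHadd

variable (hadd : ∀ a b : K, a + b = max a b)
variable {R J : Type*} [Fintype J]
include hadd

lemma term_le_mulVec (A : Matrix R J K) (x : J → K) (i : R) (j : J) :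
    A i j * x j ≤ A.mulVec x i := by
  rw [mulVec_apply]
  exact term_le_sum hadd Finset.univ (fun j' => A i j' * x j') (Finset.mem_univ j)

lemma tropSingular_iff (A : Matrix R J K) :
    A.TropSingular ↔ ∃ x : J → K, x ≠ 0 ∧ ∀ i, TieAt A x i := by
  classical
  constructor
  · rintro ⟨A₁, A₂, hA, hdisj, x, hx, hmv⟩
    refine ⟨x, hx, fun i => ?_⟩
    have hsum : A.mulVec x i = A₁.mulVec x i + A₂.mulVec x i := by
      rw [hA, Matrix.add_mulVec]; rfl
    have hAi : A.mulVec x i = A₁.mulVec x i := by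
      rw [hsum, ← congrFun hmv i, hadd, max_self]
    rcases eq_or_ne (A.mulVec x i) 0 with h0 | h0
    · exact Or.inl h0
    · have h1 : A₁.mulVec x i ≠ 0 := fun h => h0 (hAi.trans h)
      have h2 : A₂.mulVec x i ≠ 0 := fun h => h0 (by rw [hAi, congrFun hmv i]; exact h)
      rcases sum_cases hadd Finset.univ (fun j => A₁ i j * x j) with hz | ⟨j₁, _, hj₁⟩
      · exact absurd hz h1
      rcases sum_cases hadd Finset.univ (fun j => A₂ i j * x j) with hz | ⟨j₂, _, hj₂⟩
      · exact absurd hz h2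
      have hj₁' : A₁ i j₁ * x j₁ = A₁.mulVec x i := hj₁
      have hj₂' : A₂ i j₂ * x j₂ = A₂.mulVec x i := hj₂
      have hne : j₁ ≠ j₂ := by
        rintro rfl
        have hA₁ : A₁ i j₁ ≠ 0 := fun h => h1 (by rw [← hj₁', h, zero_mul])
        have hA₂ : A₂ i j₁ ≠ 0 := fun h => h2 (by rw [← hj₂', h, zero_mul])
        rcases hdisj i j₁ with h | h
        exacts [hA₁ h, hA₂ h]
      refine Or.inr ⟨j₁, j₂, hne, ?_, ?_⟩
      · have hAe : A i j₁ = A₁ i j₁ + A₂ i j₁ := by rw [hA]; rfl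
        have hle : A₂ i j₁ * x j₁ ≤ A₁.mulVec x i := by
          rw [congrFun hmv i]
          exact term_le_mulVec hadd A₂ x i j₁
        rw [hAe, add_mul, hj₁', hAi, hadd, max_eq_left hle]
      · have hAe : A i j₂ = A₁ i j₂ + A₂ i j₂ := by rw [hA]; rfl
        have hle : A₁ i j₂ * x j₂ ≤ A₂.mulVec x i := by
          rw [← congrFun hmv i]
          exact term_le_mulVec hadd A₁ x i j₂
        rw [hAe, add_mul, hj₂', hAi, congrFun hmv i, hadd, max_eq_right hle]
  · rintro ⟨x, hx, hties⟩
    obtain ⟨j₀, hj₀⟩ := Function.ne_iff.mp hx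
    have hc : ∀ i : R, ∃ j : J, A.mulVec x i ≠ 0 → A i j * x j = A.mulVec x i := by
      intro i
      rcases hties i with h0 | ⟨j₁, j₂, _, h₁, _⟩
      · exact ⟨j₀, fun h => absurd h0 h⟩
      · exact ⟨j₁, fun _ => h₁⟩
    choose c hcc using hc
    refine ⟨Matrix.of fun i j => if j = c i then A i j else 0,
            Matrix.of fun i j => if j = c i then 0 else A i j, ?_, ?_, x, hx, ?_⟩
    · ext i j
      by_cases h : j = c i <;> simp [Matrix.add_apply, h]
    · intro i j
      by_cases h : j = c i <;> simp [h]
    · funext i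
      have h1v : (Matrix.of fun i j => if j = c i then A i j else 0).mulVec x i
          = A i (c i) * x (c i) := by
        rw [mulVec_apply]
        rw [Finset.sum_eq_single (c i)]
        · simp
        · intro b _ hb; simp [hb]
        · intro h; exact absurd (Finset.mem_univ _) h
      have hsum : (Matrix.of fun i j => if j = c i then A i j else 0).mulVec x i
          + (Matrix.of fun i j => if j = c i then 0 else A i j).mulVec x i
          = A.mulVec x i := by
        rw [mulVec_apply, mulVec_apply, mulVec_apply, ← Finset.sum_add_distrib]
        congr 1; funext j
        by_cases h : j = c i <;> simp [h, add_mul]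
      rcases eq_or_ne (A.mulVec x i) 0 with h0 | h0
      · have h1 : (Matrix.of fun i j => if j = c i then A i j else 0).mulVec x i = 0 :=
          add_eq_zero_left hadd (hsum.trans h0)
        have hsum' : (Matrix.of fun i j => if j = c i then 0 else A i j).mulVec x i
            + (Matrix.of fun i j => if j = c i then A i j else 0).mulVec x i = 0 := by
          rw [add_comm, hsum]; exact h0
        have h2 : (Matrix.of fun i j => if j = c i then 0 else A i j).mulVec x i = 0 :=
          add_eq_zero_left hadd hsum'
        rw [h1, h2]
      · -- nonzero row: the chosen column attains the value
        have hcv : A i (c i) * x (c i) = A.mulVec x i := hcc i h0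
        rw [h1v, hcv]
        -- second part also attains: pick the tie witness distinct from c i
        rcases hties i with h0' | ⟨j₁, j₂, hne, h₁, h₂⟩
        · exact absurd h0' h0
        have hwit : ∃ j, j ≠ c i ∧ A i j * x j = A.mulVec x i := by
          rcases eq_or_ne j₁ (c i) with rfl | hj1
          · exact ⟨j₂, fun h => hne h.symm, h₂⟩
          · exact ⟨j₁, hj1, h₁⟩
        obtain ⟨j, hj, hjv⟩ := hwit
        have hle : (Matrix.of fun i j => if j = c i then 0 else A i j).mulVec x i
            ≤ A.mulVec x i := by
          rw [← hsum]; exact le_add_r hadd _ _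
        have hge : A.mulVec x i
            ≤ (Matrix.of fun i j => if j = c i then 0 else A i j).mulVec x i := by
          rw [← hjv]
          have := term_le_mulVec hadd
            (Matrix.of fun i j => if j = c i then 0 else A i j) x i j
          simpa [hj] using this
        exact le_antisymm hge hle

lemma mulVec_add' (A : Matrix R J K) (u v : J → K) (i : R) :
    A.mulVec (fun j => u j + v j) i = A.mulVec u i + A.mulVec v i := by
  simp only [mulVec_apply, mul_add, Finset.sum_add_distrib]

lemma mulVec_smul' (A : Matrix R J K) (μ : K) (v : J → K) (i : R) :
    A.mulVec (fun j => μ * v j) i = μ * A.mulVec v i := by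
  simp only [mulVec_apply, Finset.mul_sum, mul_left_comm]

lemma tieAt_add_left {A : Matrix R J K} {u v : J → K} {i : R}
    (h1 : TieAt A u i) (h2 : A.mulVec v i ≤ A.mulVec u i) :
    TieAt A (fun j => u j + v j) i := by
  have hv : A.mulVec (fun j => u j + v j) i = A.mulVec u i := by
    rw [mulVec_add' hadd, hadd, max_eq_left h2]
  rcases h1 with h0 | ⟨j₁, j₂, hne, hj₁, hj₂⟩
  · exact Or.inl (hv.trans h0)
  · refine Or.inr ⟨j₁, j₂, hne, ?_, ?_⟩
    · rw [hv, mul_add, hadd, hj₁]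
      exact max_eq_left ((term_le_mulVec hadd A v i j₁).trans h2)
    · rw [hv, mul_add, hadd, hj₂]
      exact max_eq_left ((term_le_mulVec hadd A v i j₂).trans h2)

lemma tieAt_add_right {A : Matrix R J K} {u v : J → K} {i : R}
    (h1 : TieAt A v i) (h2 : A.mulVec u i ≤ A.mulVec v i) :
    TieAt A (fun j => u j + v j) i := by
  have : (fun j => u j + v j) = (fun j => v j + u j) := by
    funext j; exact add_comm _ _
  rw [this]
  exact tieAt_add_left hadd h1 h2

lemma tieAt_smul {A : Matrix R J K} {v : J → K} {i : R} (μ : K)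
    (h1 : TieAt A v i) : TieAt A (fun j => μ * v j) i := by
  have hv : A.mulVec (fun j => μ * v j) i = μ * A.mulVec v i := mulVec_smul' hadd A μ v i
  rcases h1 with h0 | ⟨j₁, j₂, hne, hj₁, hj₂⟩
  · exact Or.inl (by rw [hv, h0, mul_zero])
  · refine Or.inr ⟨j₁, j₂, hne, ?_, ?_⟩
    · rw [hv, mul_left_comm, hj₁]
    · rw [hv, mul_left_comm, hj₂]

lemma descent [DecidableEq R] (A : Matrix R J K) (T : Finset R)
    (hT : Fintype.card J < T.card) (hreg : ¬ SingOn A T) :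
    ∃ i ∈ T, ¬ SingOn A (T.erase i) := by
  classical
  by_contra hcon
  push_neg at hcon
  choose x hx0 hties using hcon
  have hnot : ∀ (i : R) (hi : i ∈ T), ¬ TieAt A (x i hi) i := by
    intro i hi ht
    refine hreg ⟨x i hi, hx0 i hi, ?_⟩
    intro m hm
    rcases eq_or_ne m i with rfl | hmi
    · exact ht
    · exact hties i hi m (Finset.mem_erase.mpr ⟨hmi, hm⟩)
  have hval : ∀ (i : R) (hi : i ∈ T), A.mulVec (x i hi) i ≠ 0 :=
    fun i hi h0 => hnot i hi (Or.inl h0)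
  have hattain : ∀ (i : R) (hi : i ∈ T),
      ∃ j : J, A i j * x i hi j = A.mulVec (x i hi) i := by
    intro i hi
    rcases sum_cases hadd Finset.univ (fun j => A i j * x i hi j) with h0 | ⟨j, _, hj⟩
    · exact absurd h0 (hval i hi)
    · exact ⟨j, hj⟩
  choose jj hjj using hattain
  -- pigeonhole on the attaining columns
  obtain ⟨i₁, _, i₂, _, hne12, heq⟩ :=
    Finset.exists_ne_map_eq_of_card_lt_of_maps_to
      (t := (Finset.univ : Finset J))
      (by rw [Finset.card_attach]; simpa using hT)
      (fun (a : {i // i ∈ T}) _ => Finset.mem_univ (jj a.1 a.2))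
  obtain ⟨i, hi⟩ := i₁
  obtain ⟨k, hk⟩ := i₂
  have hik : i ≠ k := fun h => hne12 (Subtype.ext h)
  set u : J → K := x i hi with hu
  set v : J → K := x k hk with hvv
  set j : J := jj i hi with hj
  have hjk : jj k hk = j := heq.symm
  set a : K := A.mulVec u i with hadef
  set b : K := A.mulVec v k with hbdef
  have ha : A i j * u j = a := hjj i hi
  have hb : A k j * v j = b := by rw [← hjk]; exact hjj k hk
  have haz : a ≠ 0 := hval i hi
  have hbz : b ≠ 0 := hval k hk
  set cik : K := A.mulVec u k with hcikdef
  set cki : K := A.mulVec v i with hckidef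
  have hcik : A k j * u j ≤ cik := term_le_mulVec hadd A u k j
  have hcki : A i j * v j ≤ cki := term_le_mulVec hadd A v i j
  have key : a * b ≤ cik * cki := by
    have : a * b = (A k j * u j) * (A i j * v j) := by
      rw [← ha, ← hb]; ring
    rw [this]
    exact mul_le_mul'' hadd hcik hcki
  set μ : K := cik * b⁻¹ with hμ
  have hμb : μ * b = cik := by
    rw [hμ, mul_assoc, inv_mul_cancel₀ hbz, mul_one]
  have hμcki : a ≤ μ * cki := by
    have h1 : a * b * b⁻¹ ≤ cik * cki * b⁻¹ := mul_le_mono hadd key b⁻¹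
    have h2 : a * b * b⁻¹ = a := by
      rw [mul_assoc, mul_inv_cancel₀ hbz, mul_one]
    have h3 : cik * cki * b⁻¹ = μ * cki := by rw [hμ]; ring
    rw [h2, h3] at h1; exact h1
  set y : J → K := fun j' => u j' + μ * v j' with hy
  have huj : u j ≠ 0 := fun h => haz (by rw [← ha, h, mul_zero])
  have hy0 : y ≠ 0 := by
    intro h
    have : y j = 0 := congrFun h j
    exact huj (add_eq_zero_left hadd this)
  refine hreg ⟨y, hy0, ?_⟩
  intro m hm
  rcases eq_or_ne m i with rfl | hmi
  · -- row i: use v's tie, dominance from key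
    refine tieAt_add_right hadd (tieAt_smul hadd μ (hties k hk m
      (Finset.mem_erase.mpr ⟨hik, hm⟩))) ?_
    rw [mulVec_smul' hadd]
    exact hμcki
  rcases eq_or_ne m k with rfl | hmk
  · -- row k: use u's tie
    refine tieAt_add_left hadd (hties i hi m (Finset.mem_erase.mpr ⟨hik.symm, hm⟩)) ?_
    rw [mulVec_smul' hadd, ← hbdef, hμb]
  · -- other rows: both have ties
    have t1 : TieAt A u m := hties i hi m (Finset.mem_erase.mpr ⟨hmi, hm⟩)
    have t2 : TieAt A v m := hties k hk m (Finset.mem_erase.mpr ⟨hmk, hm⟩)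
    rcases le_total (A.mulVec (fun j' => μ * v j') m) (A.mulVec u m) with hle | hle
    · exact tieAt_add_left hadd t1 hle
    · exact tieAt_add_right hadd (tieAt_smul hadd μ t2) hle

lemma exists_regular_subset [DecidableEq R] (A : Matrix R J K) (T : Finset R)
    (hle : Fintype.card J ≤ T.card) (hreg : ¬ SingOn A T) :
    ∃ S ⊆ T, S.card = Fintype.card J ∧ ¬ SingOn A S := by
  classical
  induction T using Finset.strongInductionOn with
  | _ T ih =>
    rcases eq_or_lt_of_le hle with heq | hlt
    · exact ⟨T, Finset.Subset.refl T, heq.symm, hreg⟩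
    · obtain ⟨i, hi, hri⟩ := descent hadd A T hlt hreg
      obtain ⟨S, hSsub, hScard, hSreg⟩ := ih (T.erase i) (Finset.erase_ssubset hi)
        (by rw [Finset.card_erase_of_mem hi]; omega) hri
      exact ⟨S, hSsub.trans (Finset.erase_subset i T), hScard, hSreg⟩

end WithHadd

end TropAux

/-- Incomplete basis theorem: a regular family of `p ≤ n` vectors of `Kⁿ` can be
completed to a regular family of `n` vectors by adjoining `n - p` standard basis
vectors. -/
theorem incomplete_basis_theorem {K : Type*} [Semifield K] [LinearOrder K]
    (hadd : ∀ a b : K, a + b = max a b) {p n : ℕ} (hpn : p ≤ n)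
    (f : Fin p → (Fin n → K))
    (hreg : ¬ (Matrix.of fun i j => f j i : Matrix (Fin n) (Fin p) K).TropSingular) :
    ∃ g : Fin (n - p) → Fin n, Function.Injective g ∧
      ¬ (Matrix.of fun i j => Sum.elim (fun j : Fin p => f j i)
          (fun j : Fin (n - p) => if i = g j then (1 : K) else 0) j :
        Matrix (Fin n) (Fin p ⊕ Fin (n - p)) K).TropSingular := by
  classical
  open TropAux in
  set A : Matrix (Fin n) (Fin p) K := Matrix.of fun i j => f j i with hA
  have hAreg : ¬ TropAux.SingOn A Finset.univ := by
    rintro ⟨x, hx, ht⟩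
    exact hreg ((TropAux.tropSingular_iff hadd A).2
      ⟨x, hx, fun i => ht i (Finset.mem_univ i)⟩)
  obtain ⟨S, -, hScard, hSreg⟩ := TropAux.exists_regular_subset hadd A Finset.univ
    (by simpa using hpn) hAreg
  have hScard' : S.card = p := by simpa using hScard
  have hcompl : Sᶜ.card = n - p := by
    rw [Finset.card_compl, hScard']; simp
  set g : Fin (n - p) → Fin n := fun j => ((Sᶜ.orderIsoOfFin hcompl) j : Fin n) with hg
  have hginj : Function.Injective g :=
    fun a b h => (Sᶜ.orderIsoOfFin hcompl).injective (Subtype.ext h)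
  have hgmem : ∀ j, g j ∉ S := by
    intro j
    have : (g j) ∈ Sᶜ := ((Sᶜ.orderIsoOfFin hcompl) j).2
    exact Finset.mem_compl.mp this
  refine ⟨g, hginj, ?_⟩
  intro hsing
  set B : Matrix (Fin n) (Fin p ⊕ Fin (n - p)) K := Matrix.of fun i j =>
    Sum.elim (fun j : Fin p => f j i)
      (fun j : Fin (n - p) => if i = g j then (1 : K) else 0) j with hB
  obtain ⟨z, hz0, hties⟩ := (TropAux.tropSingular_iff hadd B).1 hsing
  set x : Fin p → K := fun j => z (Sum.inl j) with hx
  by_cases hxz : x = 0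
  · -- all inl coordinates vanish, so some inr coordinate is nonzero
    obtain ⟨s, hs⟩ := Function.ne_iff.mp hz0
    obtain ⟨j, hjz⟩ : ∃ j : Fin (n - p), z (Sum.inr j) ≠ 0 := by
      cases s with
      | inl j => exact absurd (congrFun hxz j) hs
      | inr j => exact ⟨j, hs⟩
    have hmv : B.mulVec z (g j) = z (Sum.inr j) := by
      rw [TropAux.mulVec_apply, Fintype.sum_sum_type]
      have h1 : ∀ j' : Fin p, B (g j) (Sum.inl j') * z (Sum.inl j') = 0 := by
        intro j'
        rw [show z (Sum.inl j') = 0 from congrFun hxz j', mul_zero]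
      have h2 : (∑ j' : Fin (n - p), B (g j) (Sum.inr j') * z (Sum.inr j'))
          = z (Sum.inr j) := by
        rw [Finset.sum_eq_single j]
        · have : B (g j) (Sum.inr j) = 1 := by simp [hB]
          rw [this, one_mul]
        · intro b _ hb
          have : B (g j) (Sum.inr b) = 0 := by
            simp only [hB, Matrix.of_apply, Sum.elim_inr, ite_eq_right_iff]
            intro h; exact absurd (hginj h).symm hb
          rw [this, zero_mul]
        · intro h; exact absurd (Finset.mem_univ _) h
      rw [Finset.sum_eq_zero (fun j' _ => h1 j'), h2, zero_add]
    rcases hties (g j) with h0 | ⟨s₁, s₂, hne, h₁, h₂⟩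
    · exact hjz (hmv.symm.trans h0)
    · -- only one column can attain the nonzero value
      have honly : ∀ s : Fin p ⊕ Fin (n - p),
          B (g j) s * z s = B.mulVec z (g j) → s = Sum.inr j := by
        intro s hsv
        rw [hmv] at hsv
        cases s with
        | inl j' =>
          rw [show z (Sum.inl j') = 0 from congrFun hxz j', mul_zero] at hsv
          exact absurd hsv.symm hjz
        | inr j' =>
          rcases eq_or_ne j' j with rfl | hj'
          · rfl
          · have : B (g j) (Sum.inr j') = 0 := by
              simp only [hB, Matrix.of_apply, Sum.elim_inr, ite_eq_right_iff]
              intro h; exact absurd (hginj h).symm hj'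
            rw [this, zero_mul] at hsv
            exact absurd hsv.symm hjz
      exact hne ((honly s₁ h₁).trans (honly s₂ h₂).symm)
  · -- the inl part is a singularity witness for A on S
    refine hSreg ⟨x, hxz, ?_⟩
    intro i hiS
    have hrow : ∀ j' : Fin (n - p), B i (Sum.inr j') = 0 := by
      intro j'
      simp only [hB, Matrix.of_apply, Sum.elim_inr, ite_eq_right_iff]
      intro h
      exact absurd (h ▸ hiS) (hgmem j')
    have hmv : B.mulVec z i = A.mulVec x i := by
      rw [TropAux.mulVec_apply, TropAux.mulVec_apply, Fintype.sum_sum_type]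
      have h2 : (∑ j' : Fin (n - p), B i (Sum.inr j') * z (Sum.inr j')) = 0 :=
        Finset.sum_eq_zero (fun j' _ => by rw [hrow j', zero_mul])
      rw [h2, add_zero]
      rfl
    rcases hties i with h0 | ⟨s₁, s₂, hne, h₁, h₂⟩
    · exact Or.inl (hmv.symm.trans h0)
    rcases eq_or_ne (A.mulVec x i) 0 with hz' | hz'
    · exact Or.inl hz'
    · -- witnesses must be inl
      have hinl : ∀ s : Fin p ⊕ Fin (n - p),
          B i s * z s = B.mulVec z i → ∃ j' : Fin p, s = Sum.inl j' := by
        intro s hsv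
        cases s with
        | inl j' => exact ⟨j', rfl⟩
        | inr j' =>
          rw [hrow j', zero_mul, hmv] at hsv
          exact absurd hsv.symm hz'
      obtain ⟨j₁, rfl⟩ := hinl s₁ h₁
      obtain ⟨j₂, rfl⟩ := hinl s₂ h₂
      refine Or.inr ⟨j₁, j₂, fun h => hne (by rw [h]), ?_, ?_⟩
      · rw [← hmv]; exact h₁
      · rw [← hmv]; exact h₂
end
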